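/- arXiv:2011.11571 — 5 statements merged into one kernel-verified Lean document; each statement's English description precedes it below -/
import Mathlib

section
/- Let m be an order function on ℝ^d, let N be a tempered positive Radon measure on ℝ^d, and let ρ be a nonnegative Schwartz-class function on ℝ^d with ∫_{ℝ^d} ρ(x) dx = 1 and ρ(0) > 0, such that N*ρ(x) ≤ m(x) for all x ∈ ℝ^d. Then there exists a constant C > 0, depending only on d, m and ρ (and in particular not on Ω), such that for every Borel set Ω ⊆ ℝ^d with N(Ω) < ∞ one has |N(Ω) − ∫_Ω N*ρ(x) dx| ≤ C ∫_{∂Ω^{[−1,1]}} m(x) dx. -/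
open MeasureTheory Metric Set

noncomputable section

/-- An order function on a normed space: positive, with polynomially controlled variation. -/
def IsOrderFunction {E : Type*} [NormedAddCommGroup E] (m : E → ℝ) : Prop :=
  (∀ x, 0 < m x) ∧ ∃ C ν : ℝ, 0 < C ∧ 0 ≤ ν ∧
    ∀ x y, m x ≤ C * (1 + ‖x - y‖) ^ ν * m y

/-- A tempered measure: `∫ (1+|y|)^{-k} dN(y) < ∞` for some `k ≥ 0`. -/
def IsTempered {d : ℕ} (N : Measure (EuclideanSpace ℝ (Fin d))) : Prop :=
  ∃ k : ℝ, 0 ≤ k ∧ ∫⁻ y, ENNReal.ofReal ((1 + ‖y‖) ^ (-k)) ∂N < ⊤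

/-- The convolution `N * ρ (x) = ∫ ρ(x - y) dN(y)`. -/
def mconv {d : ℕ} (N : Measure (EuclideanSpace ℝ (Fin d)))
    (ρ : EuclideanSpace ℝ (Fin d) → ℝ) (x : EuclideanSpace ℝ (Fin d)) : ℝ :=
  ∫ y, ρ (x - y) ∂N

/-- `∂Ω^{[a,b]}` for `0 ≤ a ≤ b`: points of `closure Ωᶜ` at distance in `[a,b]` from `Ω`. -/
def outerThick {d : ℕ} (Ω : Set (EuclideanSpace ℝ (Fin d))) (a b : ℝ) :
    Set (EuclideanSpace ℝ (Fin d)) :=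
  {x | x ∈ closure Ωᶜ ∧ a ≤ infDist x Ω ∧ infDist x Ω ≤ b}

/-- `∂Ω^{[-b,-a]}` for `0 ≤ a ≤ b`: points of `closure Ω` at distance in `[a,b]` from `Ωᶜ`. -/
def innerThick {d : ℕ} (Ω : Set (EuclideanSpace ℝ (Fin d))) (a b : ℝ) :
    Set (EuclideanSpace ℝ (Fin d)) :=
  {x | x ∈ closure Ω ∧ a ≤ infDist x Ωᶜ ∧ infDist x Ωᶜ ≤ b}

/-- `∂Ω^{[-1,1]}`, the unit thickening of the boundary of `Ω`. -/
def unitThick {d : ℕ} (Ω : Set (EuclideanSpace ℝ (Fin d))) :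
    Set (EuclideanSpace ℝ (Fin d)) :=
  innerThick Ω 0 1 ∪ outerThick Ω 0 1

/-!
Write `t(y) = dist(y, ∂Ω)` and `Λ(y) = (1 + t(y))^{-M}`. Since `ρ` decays faster than any power
and has mass one, `∫_Ω ρ(x - y) dx` differs from `1_Ω(y)` by `O(Λ(y))`; integrating in `y`
against `N` (Fubini) bounds `|N(Ω) - ∫_Ω N*ρ|` by `∫ Λ dN`.
The bound `N*ρ ≤ m` together with `ρ > 0` near `0` gives `N(B(x, r)) ≲ m(x)`, and `Λ` varies by a
bounded factor on `r`-balls, so `∫ Λ dN ≲ ∫ Λ m dx`. Finally each `x` lies within `t(x) + 1` of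
a unit ball inside `∂Ω^{[-1,1]}`, on which `m ≳ (1 + t(x))^{-ν} m(x)`; with `M = ν + d + 1` a
second Fubini argument gives `∫ Λ m dx ≲ ∫_{∂Ω^{[-1,1]}} m`. As `m` need not be measurable, this
last step runs with a measurable minorant of `m` comparable to it.
-/

open scoped ENNReal

theorem Real.rpow_neg_le_mul_rpow_neg {p q D k : ℝ} (hp : 0 ≤ p) (hq : 0 < q) (hD : 0 < D)
    (hk : 0 ≤ k) (h : q ≤ D * p) : p ^ (-k) ≤ D ^ k * q ^ (-k) :=
  calc p ^ (-k) = D ^ k * (D * p) ^ (-k) := by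
        rw [Real.mul_rpow hD.le hp, Real.rpow_neg hD.le, ← mul_assoc,
          mul_inv_cancel₀ (Real.rpow_pos_of_pos hD k).ne', one_mul]
    _ ≤ D ^ k * q ^ (-k) :=
        mul_le_mul_of_nonneg_left (Real.rpow_le_rpow_of_nonpos hq h (neg_nonpos.2 hk))
          (by positivity)

theorem Real.rpow_neg_add_mul_rpow_le {a b D ν r : ℝ} (ha : 0 < a) (hb : 0 < b) (hD : 0 < D)
    (hν : 0 ≤ ν) (hr : 0 ≤ r) (hba : b ≤ D * a) :
    a ^ (-(ν + r)) * b ^ ν ≤ D ^ (ν + r) * b ^ (-r) :=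
  calc a ^ (-(ν + r)) * b ^ ν = a ^ (-ν) * b ^ ν * a ^ (-r) := by
        rw [neg_add, Real.rpow_add ha]; ring
    _ ≤ a ^ (-ν) * (D ^ ν * a ^ ν) * (D ^ r * b ^ (-r)) := by
        gcongr
        · rw [← Real.mul_rpow hD.le ha.le]
          exact Real.rpow_le_rpow hb.le hba hν
        · exact Real.rpow_neg_le_mul_rpow_neg ha.le hb hD hr hba
    _ = D ^ (ν + r) * b ^ (-r) := by
        rw [Real.rpow_neg ha.le, Real.rpow_add hD]
        field_simp

theorem SchwartzMap.exists_norm_le_mul_one_add_norm_rpow_neg {E F : Type*}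
    [NormedAddCommGroup E] [NormedSpace ℝ E] [NormedAddCommGroup F] [NormedSpace ℝ F]
    (f : SchwartzMap E F) (s : ℝ) : ∃ B, 0 ≤ B ∧ ∀ z, ‖f z‖ ≤ B * (1 + ‖z‖) ^ (-s) := by
  set n := ⌈s⌉₊
  refine ⟨2 ^ n * (Finset.Iic (n, 0)).sup (fun m => SchwartzMap.seminorm ℝ m.1 m.2) f,
    by positivity, fun z => ?_⟩
  have hdecay := one_add_le_sup_seminorm_apply (𝕜 := ℝ) (m := (n, 0)) le_rfl le_rfl f z
  rw [norm_iteratedFDeriv_zero, ← Real.rpow_natCast, ← le_div_iff₀' (by positivity),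
    div_eq_mul_inv, ← Real.rpow_neg (by positivity)] at hdecay
  refine hdecay.trans (mul_le_mul_of_nonneg_left ?_ (by positivity))
  exact Real.rpow_le_rpow_of_exponent_le (by simp) (neg_le_neg (Nat.le_ceil s))

theorem ENNReal.ofReal_abs_toReal_sub_toReal_le {a b e : ℝ≥0∞} (ha : a ≠ ∞) (hab : a ≤ b + e)
    (hba : b ≤ a + e) : ENNReal.ofReal |a.toReal - b.toReal| ≤ e := by
  rcases eq_or_ne e ∞ with rfl | he
  · exact le_top
  have hb : b ≠ ∞ := ne_top_of_le_ne_top (ENNReal.add_ne_top.2 ⟨ha, he⟩) hba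
  have h₁ := ENNReal.toReal_mono (ENNReal.add_ne_top.2 ⟨hb, he⟩) hab
  have h₂ := ENNReal.toReal_mono (ENNReal.add_ne_top.2 ⟨ha, he⟩) hba
  rw [ENNReal.toReal_add hb he] at h₁
  rw [ENNReal.toReal_add ha he] at h₂
  rw [← ENNReal.ofReal_toReal he]
  exact ENNReal.ofReal_le_ofReal (abs_sub_le_iff.2 ⟨by linarith, by linarith⟩)

theorem exists_infDist_eq_zero_dist_le {X : Type*} [PseudoMetricSpace X] (s : Set X) (x : X) :
    ∃ w, infDist w s = 0 ∧ dist x w ≤ infDist x s + 1 := by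
  rcases s.eq_empty_or_nonempty with rfl | hs
  · exact ⟨x, infDist_empty, by simp⟩
  · obtain ⟨w, hw, hxw⟩ := (infDist_lt_iff hs).mp (lt_add_one (infDist x s))
    exact ⟨w, infDist_zero_of_mem hw, hxw.le⟩

theorem infDist_compl_le_infDist_frontier {X : Type*} [PseudoMetricSpace X] [PreconnectedSpace X]
    {s : Set X} {z : X} (hz : z ∈ s) : infDist z sᶜ ≤ infDist z (frontier s) := by
  rcases (frontier s).eq_empty_or_nonempty with hf | hf
  · obtain rfl | rfl := frontier_eq_empty_iff.mp hf
    · exact absurd hz (notMem_empty z)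
    · simp
  · rw [← infDist_closure (s := sᶜ)]
    exact infDist_le_infDist_of_subset (frontier_compl s ▸ frontier_subset_closure) hf

theorem infDist_frontier_le_dist_of_mem_of_notMem {E : Type*} [NormedAddCommGroup E]
    [NormedSpace ℝ E] [FiniteDimensional ℝ E] {s : Set E} {x z : E} (hx : x ∈ s) (hz : z ∉ s) :
    infDist x (frontier s) ≤ dist x z := by
  obtain ⟨y, hy, hxy⟩ :=
    exists_mem_frontier_infDist_compl_eq_dist hx (by rintro rfl; exact hz (mem_univ z))
  calc infDist x (frontier s) ≤ dist x y := infDist_le_dist_of_mem hy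
    _ = infDist x sᶜ := hxy.symm
    _ ≤ dist x z := infDist_le_dist_of_mem hz

theorem setOf_infDist_frontier_le_one_subset_unitThick {d : ℕ}
    (Ω : Set (EuclideanSpace ℝ (Fin d))) :
    {z | infDist z (frontier Ω) ≤ 1} ⊆ unitThick Ω := by
  intro z hz
  by_cases hzΩ : z ∈ Ω
  · exact Or.inl ⟨subset_closure hzΩ, infDist_nonneg,
      (infDist_compl_le_infDist_frontier hzΩ).trans hz⟩
  · refine Or.inr ⟨subset_closure hzΩ, infDist_nonneg, ?_⟩
    have h := infDist_compl_le_infDist_frontier (s := Ωᶜ) hzΩ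
    rw [compl_compl, frontier_compl] at h
    exact h.trans hz

def distWeight {X : Type*} [PseudoMetricSpace X] (s : Set X) (M : ℝ) (y : X) : ℝ≥0∞ :=
  ENNReal.ofReal ((1 + infDist y s) ^ (-M))

theorem measurable_distWeight {X : Type*} [PseudoMetricSpace X] [MeasurableSpace X]
    [OpensMeasurableSpace X] (s : Set X) (M : ℝ) : Measurable (distWeight s M) :=
  ((continuous_const.add (continuous_infDist_pt s)).rpow_const
    fun _ => Or.inl (add_pos_of_pos_of_nonneg one_pos infDist_nonneg).ne').measurable.ennreal_ofReal

theorem distWeight_le_of_dist_le {X : Type*} [PseudoMetricSpace X] (s : Set X) {M r : ℝ}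
    (hM : 0 ≤ M) (hr : 0 ≤ r) {x y : X} (hxy : dist x y ≤ r) :
    distWeight s M y ≤ ENNReal.ofReal ((1 + r) ^ M) * distWeight s M x := by
  rw [distWeight, distWeight, ← ENNReal.ofReal_mul (by positivity)]
  refine ENNReal.ofReal_le_ofReal (Real.rpow_neg_le_mul_rpow_neg
    (add_nonneg zero_le_one infDist_nonneg) (add_pos_of_pos_of_nonneg one_pos infDist_nonneg)
    (by positivity) hM ?_)
  nlinarith [infDist_le_infDist_add_dist (x := x) (y := y) (s := s),
    infDist_nonneg (x := y) (s := s)]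

theorem IsOrderFunction.exists_measurable_minorant {E : Type*} [NormedAddCommGroup E]
    [MeasurableSpace E] [OpensMeasurableSpace E] [TopologicalSpace.SeparableSpace E]
    {m : E → ℝ} (hm : IsOrderFunction m) :
    ∃ g : E → ℝ≥0∞, Measurable g ∧ (∀ z, g z ≤ ENNReal.ofReal (m z)) ∧ ∃ C ν : ℝ, 0 ≤ C ∧ 0 ≤ ν ∧
      ∀ x z, ENNReal.ofReal (m x) ≤ ENNReal.ofReal (C * (1 + ‖x - z‖) ^ ν) * g z := by
  obtain ⟨hpos, C₀, ν, hC₀, hν, hle⟩ := hm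
  obtain ⟨D, hDc, hDd⟩ := TopologicalSpace.exists_countable_dense E
  have := hDc.to_subtype
  have hcont (q : E) : Continuous fun z => C₀ * (1 + ‖q - z‖) ^ ν :=
    continuous_const.mul
      ((continuous_const.add (continuous_const.sub continuous_id).norm).rpow_const
        fun _ => Or.inr hν)
  refine ⟨fun z => ⨆ q : D, ENNReal.ofReal (m q / (C₀ * (1 + ‖(q : E) - z‖) ^ ν)),
    .iSup fun q => (measurable_const.div (hcont q).measurable).ennreal_ofReal,
    fun z => iSup_le fun q => ENNReal.ofReal_le_ofReal ?_, C₀ ^ 2 * 4 ^ ν, ν, by positivity, hν,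
    fun x z => ?_⟩
  · rw [div_le_iff₀ (by positivity), mul_comm]
    exact hle q z
  obtain ⟨q, hqD, hxq⟩ := hDd.exists_dist_lt x one_pos
  rw [dist_eq_norm] at hxq
  refine le_trans ?_ (mul_le_mul' le_rfl (le_iSup _ (⟨q, hqD⟩ : D)))
  rw [← ENNReal.ofReal_mul (by positivity)]
  refine ENNReal.ofReal_le_ofReal ?_
  have hqz : (1 + ‖q - z‖) ^ ν ≤ 2 ^ ν * (1 + ‖x - z‖) ^ ν := by
    rw [← Real.mul_rpow (by norm_num) (by positivity)]
    refine Real.rpow_le_rpow (by positivity) ?_ hν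
    linarith [norm_sub_le_norm_sub_add_norm_sub q x z, norm_sub_rev q x, norm_nonneg (x - z)]
  calc m x ≤ C₀ * (1 + ‖x - q‖) ^ ν * m q := hle x q
    _ ≤ C₀ * 2 ^ ν * m q := by
      gcongr
      · exact (hpos q).le
      · linarith
    _ = C₀ ^ 2 * 4 ^ ν * (1 + ‖x - z‖) ^ ν * (m q / (C₀ * (2 ^ ν * (1 + ‖x - z‖) ^ ν))) := by
      rw [show (4 : ℝ) ^ ν = 2 ^ ν * 2 ^ ν by
        rw [← Real.mul_rpow (by norm_num) (by norm_num)]; norm_num]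
      field_simp
    _ ≤ C₀ ^ 2 * 4 ^ ν * (1 + ‖x - z‖) ^ ν * (m q / (C₀ * (1 + ‖q - z‖) ^ ν)) := by
      gcongr
      exact (hpos q).le

section Haar

variable {E : Type*} [NormedAddCommGroup E] [MeasurableSpace E] [BorelSpace E] {μ : Measure E}
  [μ.IsAddHaarMeasure]

theorem ofReal_mul_measure_closedBall_le_lintegral {ρ : E → ℝ} {c r : ℝ}
    (hρ : ∀ z ∈ closedBall (0 : E) r, c ≤ ρ z) (N : Measure E) (x : E) :
    ENNReal.ofReal c * N (closedBall x r) ≤ ∫⁻ y, ENNReal.ofReal (ρ (x - y)) ∂N := by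
  rw [← setLIntegral_const]
  refine (setLIntegral_mono' measurableSet_closedBall fun y hy => ENNReal.ofReal_le_ofReal
    (hρ _ ?_)).trans (setLIntegral_le_lintegral _ _)
  rwa [mem_closedBall_zero_iff, ← dist_eq_norm, ← mem_closedBall']

theorem setLIntegral_ofReal_sub_le_of_le_norm_sub {ρ : E → ℝ} {B M r s : ℝ}
    (hρ : ∀ z, ρ z ≤ B * (1 + ‖z‖) ^ (-(M + r))) (hB : 0 ≤ B) (hM : 0 ≤ M) (hs : 0 ≤ s)
    {A : Set E} {y : E} (hA : ∀ x ∈ A, s ≤ ‖x - y‖) :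
    ∫⁻ x in A, ENNReal.ofReal (ρ (x - y)) ∂μ ≤
      ENNReal.ofReal B * (∫⁻ z, ENNReal.ofReal ((1 + ‖z‖) ^ (-r)) ∂μ) *
        ENNReal.ofReal ((1 + s) ^ (-M)) := by
  have hpt : ∀ x ∈ A, ENNReal.ofReal (ρ (x - y)) ≤
      ENNReal.ofReal (B * (1 + s) ^ (-M)) * ENNReal.ofReal ((1 + ‖x - y‖) ^ (-r)) := by
    intro x hx
    rw [← ENNReal.ofReal_mul (by positivity)]
    refine ENNReal.ofReal_le_ofReal ((hρ (x - y)).trans ?_)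
    rw [neg_add, Real.rpow_add (by positivity), ← mul_assoc]
    refine mul_le_mul_of_nonneg_right (mul_le_mul_of_nonneg_left ?_ hB) (by positivity)
    exact Real.rpow_le_rpow_of_nonpos (by positivity) (by linarith [hA x hx]) (by linarith)
  calc ∫⁻ x in A, ENNReal.ofReal (ρ (x - y)) ∂μ
      ≤ ∫⁻ x, ENNReal.ofReal (B * (1 + s) ^ (-M)) * ENNReal.ofReal ((1 + ‖x - y‖) ^ (-r)) ∂μ :=
        (setLIntegral_mono (by fun_prop) hpt).trans (setLIntegral_le_lintegral _ _)
    _ = _ := by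
        rw [lintegral_const_mul _ (by fun_prop),
          lintegral_sub_right_eq_self (fun z => ENNReal.ofReal ((1 + ‖z‖) ^ (-r))) y,
          ENNReal.ofReal_mul hB]
        ring

theorem distWeight_mul_mul_measure_closedBall_le {f g : E → ℝ≥0∞} {C ν r : ℝ}
    (hg : Measurable g) (hfg : ∀ x z, f x ≤ ENNReal.ofReal (C * (1 + ‖x - z‖) ^ ν) * g z)
    (hC : 0 ≤ C) (hν : 0 ≤ ν) (hr : 0 ≤ r) (s : Set E) (x : E) :
    distWeight s (ν + r) x * f x * μ (closedBall 0 1) ≤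
      ∫⁻ z, ENNReal.ofReal (C * 3 ^ (ν + r)) * ENNReal.ofReal ((1 + ‖x - z‖) ^ (-r)) *
        {z | infDist z s ≤ 1}.indicator g z ∂μ := by
  set T := {z | infDist z s ≤ 1}
  have hT : IsClosed T := isClosed_le (continuous_infDist_pt s) continuous_const
  obtain ⟨w, hw, hxw⟩ := exists_infDist_eq_zero_dist_le s x
  have hpt (z) (hz : z ∈ closedBall w 1) : distWeight s (ν + r) x * f x ≤
      ENNReal.ofReal (C * 3 ^ (ν + r)) * ENNReal.ofReal ((1 + ‖x - z‖) ^ (-r)) *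
        T.indicator g z := by
    rw [mem_closedBall] at hz
    have hzT : z ∈ T := by
      show infDist z s ≤ 1
      linarith [infDist_le_infDist_add_dist (x := z) (y := w) (s := s)]
    have hxz : dist x z ≤ infDist x s + 2 := by linarith [dist_triangle x w z, dist_comm z w]
    set a := 1 + infDist x s
    have ha : 0 < a := add_pos_of_pos_of_nonneg one_pos infDist_nonneg
    have hba : 1 + ‖x - z‖ ≤ 3 * a := by
      rw [← dist_eq_norm]; linarith [infDist_nonneg (x := x) (s := s)]
    rw [indicator_of_mem hzT, distWeight, ← ENNReal.ofReal_mul (by positivity), mul_assoc]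
    calc ENNReal.ofReal (a ^ (-(ν + r))) * f x
        ≤ ENNReal.ofReal (a ^ (-(ν + r))) * (ENNReal.ofReal (C * (1 + ‖x - z‖) ^ ν) * g z) := by
          gcongr; exact hfg x z
      _ = ENNReal.ofReal (C * (a ^ (-(ν + r)) * (1 + ‖x - z‖) ^ ν)) * g z := by
          rw [← mul_assoc, ← ENNReal.ofReal_mul (by positivity), mul_left_comm]
      _ ≤ ENNReal.ofReal (C * (3 ^ (ν + r) * (1 + ‖x - z‖) ^ (-r))) * g z := by
          gcongr ENNReal.ofReal (C * ?_) * _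
          exact Real.rpow_neg_add_mul_rpow_le ha (by positivity) three_pos hν hr hba
  calc distWeight s (ν + r) x * f x * μ (closedBall 0 1)
      = ∫⁻ _ in closedBall w 1, distWeight s (ν + r) x * f x ∂μ := by
        rw [setLIntegral_const, Measure.addHaar_closedBall_center μ w]
    _ ≤ ∫⁻ z in closedBall w 1, ENNReal.ofReal (C * 3 ^ (ν + r)) *
          ENNReal.ofReal ((1 + ‖x - z‖) ^ (-r)) * T.indicator g z ∂μ :=
        setLIntegral_mono ((measurable_const.mul (by fun_prop)).mul
          (hg.indicator hT.measurableSet)) hpt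
    _ ≤ _ := setLIntegral_le_lintegral _ _

variable [NormedSpace ℝ E] [FiniteDimensional ℝ E]

theorem lintegral_mul_measure_closedBall_le {N : Measure E} [SFinite N] {Λ F : E → ℝ≥0∞}
    {K : ℝ≥0∞} {r : ℝ} (hK : K ≠ ∞) (hΛ : Measurable Λ)
    (hΛK : ∀ x y, dist x y ≤ r → Λ y ≤ K * Λ x) (hN : ∀ x, N (closedBall x r) ≤ F x) :
    (∫⁻ y, Λ y ∂N) * μ (closedBall 0 r) ≤ K * ∫⁻ x, Λ x * F x ∂μ := by
  set k : E → E → ℝ≥0∞ := fun y x => (closedBall y r).indicator (fun _ => Λ y) x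
  have hk : Measurable (Function.uncurry k) := by
    refine Measurable.ite (p := fun q : E × E => q.2 ∈ closedBall q.1 r) ?_
      (hΛ.comp measurable_fst) measurable_const
    simp only [mem_closedBall]
    exact measurableSet_le (by fun_prop) measurable_const
  have hk_left (y) : Λ y * μ (closedBall 0 r) = ∫⁻ x, k y x ∂μ := by
    rw [lintegral_indicator measurableSet_closedBall, setLIntegral_const,
      Measure.addHaar_closedBall_center μ y r]
  have hk_right (x) : ∫⁻ y, k y x ∂N ≤ K * (Λ x * F x) :=
    calc ∫⁻ y, k y x ∂N ≤ ∫⁻ y, (closedBall x r).indicator (fun _ => K * Λ x) y ∂N := by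
          refine lintegral_mono fun y => ?_
          dsimp only [k]
          by_cases hxy : dist x y ≤ r
          · rw [indicator_of_mem (mem_closedBall.2 hxy), indicator_of_mem (mem_closedBall'.2 hxy)]
            exact hΛK x y hxy
          · rw [indicator_of_notMem (by rwa [mem_closedBall])]
            exact zero_le
      _ = K * Λ x * N (closedBall x r) := by
          rw [lintegral_indicator measurableSet_closedBall, setLIntegral_const]
      _ ≤ K * (Λ x * F x) := by
          rw [mul_assoc]
          gcongr
          exact hN x
  calc (∫⁻ y, Λ y ∂N) * μ (closedBall 0 r) = ∫⁻ y, ∫⁻ x, k y x ∂μ ∂N := by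
        rw [← lintegral_mul_const' _ _ measure_closedBall_lt_top.ne]
        simp_rw [hk_left]
    _ = ∫⁻ x, ∫⁻ y, k y x ∂N ∂μ := lintegral_lintegral_swap hk.aemeasurable
    _ ≤ ∫⁻ x, K * (Λ x * F x) ∂μ := lintegral_mono hk_right
    _ = K * ∫⁻ x, Λ x * F x ∂μ := lintegral_const_mul' _ _ hK

theorem lintegral_distWeight_mul_le {f g : E → ℝ≥0∞} {C ν r : ℝ} (hg : Measurable g)
    (hgf : ∀ z, g z ≤ f z) (hfg : ∀ x z, f x ≤ ENNReal.ofReal (C * (1 + ‖x - z‖) ^ ν) * g z)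
    (hC : 0 ≤ C) (hν : 0 ≤ ν) (hr : 0 ≤ r) (s : Set E) :
    (∫⁻ x, distWeight s (ν + r) x * f x ∂μ) * μ (closedBall 0 1) ≤
      ENNReal.ofReal (C * 3 ^ (ν + r)) * (∫⁻ z, ENNReal.ofReal ((1 + ‖z‖) ^ (-r)) ∂μ) *
        ∫⁻ z in {z | infDist z s ≤ 1}, f z ∂μ := by
  set T := {z | infDist z s ≤ 1}
  have hT : MeasurableSet T :=
    (isClosed_le (continuous_infDist_pt s) continuous_const).measurableSet
  set K := ENNReal.ofReal (C * 3 ^ (ν + r))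
  calc (∫⁻ x, distWeight s (ν + r) x * f x ∂μ) * μ (closedBall 0 1)
      = ∫⁻ x, distWeight s (ν + r) x * f x * μ (closedBall 0 1) ∂μ :=
        (lintegral_mul_const' _ _ measure_closedBall_lt_top.ne).symm
    _ ≤ ∫⁻ x, ∫⁻ z, K * ENNReal.ofReal ((1 + ‖x - z‖) ^ (-r)) * T.indicator g z ∂μ ∂μ :=
        lintegral_mono fun x =>
          distWeight_mul_mul_measure_closedBall_le hg hfg hC hν hr s x
    _ = ∫⁻ z, ∫⁻ x, K * ENNReal.ofReal ((1 + ‖x - z‖) ^ (-r)) * T.indicator g z ∂μ ∂μ :=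
        lintegral_lintegral_swap (((by fun_prop : Measurable fun p : E × E =>
          K * ENNReal.ofReal ((1 + ‖p.1 - p.2‖) ^ (-r)))).mul
            ((hg.indicator hT).comp measurable_snd)).aemeasurable
    _ = ∫⁻ z, K * (∫⁻ x, ENNReal.ofReal ((1 + ‖x‖) ^ (-r)) ∂μ) * T.indicator g z ∂μ := by
        refine lintegral_congr fun z => ?_
        rw [lintegral_mul_const _ (by fun_prop), lintegral_const_mul _ (by fun_prop),
          lintegral_sub_right_eq_self (fun x => ENNReal.ofReal ((1 + ‖x‖) ^ (-r))) z]
    _ ≤ K * (∫⁻ z, ENNReal.ofReal ((1 + ‖z‖) ^ (-r)) ∂μ) * ∫⁻ z in T, f z ∂μ := by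
        rw [lintegral_const_mul _ (hg.indicator hT), lintegral_indicator hT]
        gcongr with z
        exact hgf z

theorem indicator_le_setLIntegral_add_distWeight {ρ : E → ℝ} {B M r : ℝ}
    (hρ : ∀ z, ρ z ≤ B * (1 + ‖z‖) ^ (-(M + r))) (hB : 0 ≤ B) (hM : 0 ≤ M)
    (hρ1 : ∫⁻ z, ENNReal.ofReal (ρ z) ∂μ = 1) {Ω : Set E} (hΩ : MeasurableSet Ω) (y : E) :
    Ω.indicator 1 y ≤ ∫⁻ x in Ω, ENNReal.ofReal (ρ (x - y)) ∂μ +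
      ENNReal.ofReal B * (∫⁻ z, ENNReal.ofReal ((1 + ‖z‖) ^ (-r)) ∂μ) *
        distWeight (frontier Ω) M y := by
  by_cases hy : y ∈ Ω
  · rw [indicator_of_mem hy, Pi.one_apply, ← hρ1,
      ← lintegral_sub_right_eq_self (fun z => ENNReal.ofReal (ρ z)) y,
      ← lintegral_add_compl _ hΩ]
    gcongr
    refine setLIntegral_ofReal_sub_le_of_le_norm_sub hρ hB hM infDist_nonneg fun x hx => ?_
    rw [norm_sub_rev, ← dist_eq_norm]
    exact infDist_frontier_le_dist_of_mem_of_notMem hy hx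
  · rw [indicator_of_notMem hy]
    exact zero_le

theorem setLIntegral_le_indicator_add_distWeight {ρ : E → ℝ} {B M r : ℝ}
    (hρ : ∀ z, ρ z ≤ B * (1 + ‖z‖) ^ (-(M + r))) (hB : 0 ≤ B) (hM : 0 ≤ M)
    (hρ1 : ∫⁻ z, ENNReal.ofReal (ρ z) ∂μ = 1) {Ω : Set E} (y : E) :
    ∫⁻ x in Ω, ENNReal.ofReal (ρ (x - y)) ∂μ ≤ Ω.indicator 1 y +
      ENNReal.ofReal B * (∫⁻ z, ENNReal.ofReal ((1 + ‖z‖) ^ (-r)) ∂μ) *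
        distWeight (frontier Ω) M y := by
  by_cases hy : y ∈ Ω
  · rw [indicator_of_mem hy, Pi.one_apply, ← hρ1,
      ← lintegral_sub_right_eq_self (fun z => ENNReal.ofReal (ρ z)) y]
    exact le_add_right (setLIntegral_le_lintegral _ _)
  · rw [indicator_of_notMem hy, zero_add]
    refine setLIntegral_ofReal_sub_le_of_le_norm_sub hρ hB hM infDist_nonneg fun x hx => ?_
    rw [norm_sub_rev, ← dist_eq_norm, ← frontier_compl]
    exact infDist_frontier_le_dist_of_mem_of_notMem hy (not_not.2 hx)

theorem measure_le_setLIntegral_lintegral_add {ρ : E → ℝ} {B M r : ℝ} (hρm : Measurable ρ)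
    (hρ : ∀ z, ρ z ≤ B * (1 + ‖z‖) ^ (-(M + r))) (hB : 0 ≤ B) (hM : 0 ≤ M)
    (hρ1 : ∫⁻ z, ENNReal.ofReal (ρ z) ∂μ = 1) (N : Measure E) [SFinite N] {Ω : Set E}
    (hΩ : MeasurableSet Ω) :
    N Ω ≤ ∫⁻ x in Ω, ∫⁻ y, ENNReal.ofReal (ρ (x - y)) ∂N ∂μ +
      ENNReal.ofReal B * (∫⁻ z, ENNReal.ofReal ((1 + ‖z‖) ^ (-r)) ∂μ) *
        ∫⁻ y, distWeight (frontier Ω) M y ∂N := by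
  rw [lintegral_lintegral_swap (by fun_prop), ← lintegral_const_mul _ (measurable_distWeight _ _),
    ← lintegral_indicator_one hΩ, ← lintegral_add_right _ ((measurable_distWeight _ _).const_mul _)]
  exact lintegral_mono (indicator_le_setLIntegral_add_distWeight hρ hB hM hρ1 hΩ)

theorem setLIntegral_lintegral_le_measure_add {ρ : E → ℝ} {B M r : ℝ} (hρm : Measurable ρ)
    (hρ : ∀ z, ρ z ≤ B * (1 + ‖z‖) ^ (-(M + r))) (hB : 0 ≤ B) (hM : 0 ≤ M)
    (hρ1 : ∫⁻ z, ENNReal.ofReal (ρ z) ∂μ = 1) (N : Measure E) [SFinite N] {Ω : Set E}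
    (hΩ : MeasurableSet Ω) :
    ∫⁻ x in Ω, ∫⁻ y, ENNReal.ofReal (ρ (x - y)) ∂N ∂μ ≤ N Ω +
      ENNReal.ofReal B * (∫⁻ z, ENNReal.ofReal ((1 + ‖z‖) ^ (-r)) ∂μ) *
        ∫⁻ y, distWeight (frontier Ω) M y ∂N := by
  rw [lintegral_lintegral_swap (by fun_prop), ← lintegral_const_mul _ (measurable_distWeight _ _),
    ← lintegral_indicator_one hΩ, ← lintegral_add_right _ ((measurable_distWeight _ _).const_mul _)]
  exact lintegral_mono (setLIntegral_le_indicator_add_distWeight hρ hB hM hρ1)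

theorem lintegral_distWeight_mul_measure_closedBall_le {m : E → ℝ} {N : Measure E} [SFinite N]
    {c r M : ℝ} (hc : 0 < c) (hr : 0 ≤ r) (hM : 0 ≤ M)
    (hN : ∀ x, ENNReal.ofReal c * N (closedBall x r) ≤ ENNReal.ofReal (m x)) (s : Set E) :
    (∫⁻ y, distWeight s M y ∂N) * μ (closedBall 0 r) ≤ ENNReal.ofReal ((1 + r) ^ M) *
      (ENNReal.ofReal c)⁻¹ * ∫⁻ x, distWeight s M x * ENNReal.ofReal (m x) ∂μ := by
  have hc' : ENNReal.ofReal c ≠ 0 := by simpa using hc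
  rw [mul_assoc, ← lintegral_const_mul' _ _ (ENNReal.inv_ne_top.2 hc')]
  refine (lintegral_mul_measure_closedBall_le ENNReal.ofReal_ne_top (measurable_distWeight s M)
    (fun x y hxy => distWeight_le_of_dist_le s hM hr hxy)
    (F := fun x => (ENNReal.ofReal c)⁻¹ * ENNReal.ofReal (m x)) fun x => ?_).trans_eq ?_
  · rw [← ENNReal.inv_mul_cancel_left (b := N (closedBall x r)) hc' ENNReal.ofReal_ne_top]
    gcongr
    exact hN x
  · congr 1
    exact lintegral_congr fun x => by ring

theorem IsOrderFunction.exists_lintegral_distWeight_le {m : E → ℝ} (hm : IsOrderFunction m)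
    {N : Measure E} [SFinite N] {c r : ℝ} (hc : 0 < c) (hr : 0 < r)
    (hN : ∀ x, ENNReal.ofReal c * N (closedBall x r) ≤ ENNReal.ofReal (m x)) :
    ∃ M K, 0 ≤ M ∧ K ≠ ∞ ∧ ∀ s : Set E, ∫⁻ y, distWeight s M y ∂N ≤
      K * ∫⁻ z in {z | infDist z s ≤ 1}, ENNReal.ofReal (m z) ∂μ := by
  obtain ⟨g, hg, hgm, C, ν, hC, hν, hmg⟩ := hm.exists_measurable_minorant
  set q : ℝ := Module.finrank ℝ E + 1
  have hq : 0 ≤ q := by positivity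
  have hKb := finite_integral_one_add_norm (μ := μ) (lt_add_one (Module.finrank ℝ E : ℝ))
  have hBr := measure_closedBall_pos μ (0 : E) hr
  have hB1 := measure_closedBall_pos μ (0 : E) one_pos
  have hBr' : μ (closedBall 0 r) ≠ ∞ := measure_closedBall_lt_top.ne
  have hB1' : μ (closedBall 0 1) ≠ ∞ := measure_closedBall_lt_top.ne
  refine ⟨ν + q, ENNReal.ofReal ((1 + r) ^ (ν + q)) * (ENNReal.ofReal c)⁻¹ *
    (ENNReal.ofReal (C * 3 ^ (ν + q)) * (∫⁻ z, ENNReal.ofReal ((1 + ‖z‖) ^ (-q)) ∂μ) /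
      μ (closedBall 0 1)) / μ (closedBall 0 r), by positivity,
    ENNReal.div_ne_top (by finiteness) hBr.ne', fun s => ?_⟩
  calc ∫⁻ y, distWeight s (ν + q) y ∂N
      = (∫⁻ y, distWeight s (ν + q) y ∂N) * μ (closedBall 0 r) / μ (closedBall 0 r) :=
        (ENNReal.mul_div_cancel_right hBr.ne' hBr').symm
    _ ≤ ENNReal.ofReal ((1 + r) ^ (ν + q)) * (ENNReal.ofReal c)⁻¹ *
          ((∫⁻ x, distWeight s (ν + q) x * ENNReal.ofReal (m x) ∂μ) * μ (closedBall 0 1) /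
            μ (closedBall 0 1)) / μ (closedBall 0 r) := by
        rw [ENNReal.mul_div_cancel_right hB1.ne' hB1']
        gcongr ?_ / _
        exact lintegral_distWeight_mul_measure_closedBall_le hc hr.le (by positivity) hN s
    _ ≤ _ := by
        grw [lintegral_distWeight_mul_le hg hgm hmg hC hν hq s]
        simp only [div_eq_mul_inv]
        exact le_of_eq (by ring)

end Haar

section Convolution

variable {d : ℕ} {N : Measure (EuclideanSpace ℝ (Fin d))}

theorem IsTempered.lintegral_ofReal_sub_lt_top (hN : IsTempered N)
    (ρ : SchwartzMap (EuclideanSpace ℝ (Fin d)) ℝ) (x : EuclideanSpace ℝ (Fin d)) :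
    ∫⁻ y, ENNReal.ofReal (ρ (x - y)) ∂N < ∞ := by
  obtain ⟨k, hk, hNk⟩ := hN
  obtain ⟨B, hB, hρB⟩ := ρ.exists_norm_le_mul_one_add_norm_rpow_neg k
  have hpt : ∀ y, ρ (x - y) ≤ B * (1 + ‖x‖) ^ k * (1 + ‖y‖) ^ (-k) := by
    intro y
    refine (Real.le_norm_self _).trans ((hρB _).trans ?_)
    rw [mul_assoc]
    refine mul_le_mul_of_nonneg_left (Real.rpow_neg_le_mul_rpow_neg (by positivity)
      (by positivity) (by positivity) hk ?_) hB
    nlinarith [norm_le_norm_add_norm_sub' y x, norm_sub_rev x y, norm_nonneg x, norm_nonneg (x - y)]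
  calc ∫⁻ y, ENNReal.ofReal (ρ (x - y)) ∂N
      ≤ ∫⁻ y, ENNReal.ofReal (B * (1 + ‖x‖) ^ k) * ENNReal.ofReal ((1 + ‖y‖) ^ (-k)) ∂N :=
        lintegral_mono fun y => by
          rw [← ENNReal.ofReal_mul (by positivity)]
          exact ENNReal.ofReal_le_ofReal (hpt y)
    _ < ∞ := by
        rw [lintegral_const_mul' _ _ ENNReal.ofReal_ne_top]
        exact ENNReal.mul_lt_top ENNReal.ofReal_lt_top hNk

theorem mconv_eq_toReal_lintegral (ρ : SchwartzMap (EuclideanSpace ℝ (Fin d)) ℝ)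
    (hρ : ∀ z, 0 ≤ ρ z) (x : EuclideanSpace ℝ (Fin d)) :
    mconv N (fun z => ρ z) x = (∫⁻ y, ENNReal.ofReal (ρ (x - y)) ∂N).toReal :=
  integral_eq_lintegral_of_nonneg_ae (ae_of_all _ fun _ => hρ _)
    (ρ.continuous.comp (continuous_const.sub continuous_id)).aestronglyMeasurable

theorem IsTempered.setIntegral_mconv_eq_toReal [SFinite N] (hN : IsTempered N)
    (ρ : SchwartzMap (EuclideanSpace ℝ (Fin d)) ℝ) (hρ : ∀ z, 0 ≤ ρ z)
    (Ω : Set (EuclideanSpace ℝ (Fin d))) :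
    ∫ x in Ω, mconv N (fun z => ρ z) x =
      (∫⁻ x in Ω, ∫⁻ y, ENNReal.ofReal (ρ (x - y)) ∂N).toReal := by
  simp_rw [mconv_eq_toReal_lintegral ρ hρ]
  exact integral_toReal (by fun_prop) (ae_of_all _ fun x => hN.lintegral_ofReal_sub_lt_top ρ x)

theorem IsTempered.ofReal_mul_measure_closedBall_le (hN : IsTempered N)
    {ρ : SchwartzMap (EuclideanSpace ℝ (Fin d)) ℝ} (hρ : ∀ z, 0 ≤ ρ z)
    {m : EuclideanSpace ℝ (Fin d) → ℝ} (hbound : ∀ x, mconv N (fun z => ρ z) x ≤ m x) {c r : ℝ}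
    (hρc : ∀ z ∈ closedBall 0 r, c ≤ ρ z) (x : EuclideanSpace ℝ (Fin d)) :
    ENNReal.ofReal c * N (closedBall x r) ≤ ENNReal.ofReal (m x) := by
  refine (ofReal_mul_measure_closedBall_le_lintegral hρc N x).trans ?_
  rw [← ENNReal.ofReal_toReal (hN.lintegral_ofReal_sub_lt_top ρ x).ne,
    ← mconv_eq_toReal_lintegral ρ hρ]
  exact ENNReal.ofReal_le_ofReal (hbound x)

theorem IsTempered.exists_abs_measure_sub_setIntegral_mconv_le [SFinite N] (hN : IsTempered N)
    (ρ : SchwartzMap (EuclideanSpace ℝ (Fin d)) ℝ) (hρ : ∀ z, 0 ≤ ρ z) (hρint : ∫ x, ρ x = 1)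
    {M : ℝ} (hM : 0 ≤ M) :
    ∃ Φ : ℝ≥0∞, Φ ≠ ∞ ∧ ∀ Ω, MeasurableSet Ω → N Ω < ∞ →
      ENNReal.ofReal |(N Ω).toReal - ∫ x in Ω, mconv N (fun z => ρ z) x| ≤
        Φ * ∫⁻ y, distWeight (frontier Ω) M y ∂N := by
  obtain ⟨B, hB, hρB⟩ := ρ.exists_norm_le_mul_one_add_norm_rpow_neg (M + (d + 1))
  have hρB' (z) : ρ z ≤ B * (1 + ‖z‖) ^ (-(M + (d + 1))) := (Real.le_norm_self _).trans (hρB z)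
  have hρ1 : ∫⁻ z, ENNReal.ofReal (ρ z) = 1 := by
    rw [← ofReal_integral_eq_lintegral_ofReal ρ.integrable (ae_of_all _ hρ), hρint,
      ENNReal.ofReal_one]
  refine ⟨ENNReal.ofReal B *
      ∫⁻ z : EuclideanSpace ℝ (Fin d), ENNReal.ofReal ((1 + ‖z‖) ^ (-(d + 1 : ℝ))),
    ENNReal.mul_ne_top ENNReal.ofReal_ne_top (finite_integral_one_add_norm (by simp)).ne,
    fun Ω hΩ hNΩ => ?_⟩
  rw [hN.setIntegral_mconv_eq_toReal ρ hρ]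
  exact ENNReal.ofReal_abs_toReal_sub_toReal_le hNΩ.ne
    (measure_le_setLIntegral_lintegral_add ρ.continuous.measurable hρB' hB hM hρ1 N hΩ)
    (setLIntegral_lintegral_le_measure_add ρ.continuous.measurable hρB' hB hM hρ1 N hΩ)

end Convolution

/-- Basic multidimensional Tauberian theorem. -/
theorem tauberian_main {d : ℕ} (m : EuclideanSpace ℝ (Fin d) → ℝ)
    (hm : IsOrderFunction m)
    (N : Measure (EuclideanSpace ℝ (Fin d))) [IsLocallyFiniteMeasure N]
    (hN : IsTempered N)
    (ρ : SchwartzMap (EuclideanSpace ℝ (Fin d)) ℝ)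
    (hρpos : ∀ x, 0 ≤ ρ x) (hρint : ∫ x, ρ x = 1) (hρ0 : 0 < ρ 0)
    (hbound : ∀ x, mconv N (fun z => ρ z) x ≤ m x) :
    ∃ C : ℝ, 0 < C ∧ ∀ Ω : Set (EuclideanSpace ℝ (Fin d)),
      MeasurableSet Ω → N Ω < ⊤ →
      ENNReal.ofReal |(N Ω).toReal - ∫ x in Ω, mconv N (fun z => ρ z) x| ≤
        ENNReal.ofReal C * ∫⁻ x in unitThick Ω, ENNReal.ofReal (m x) := by
  obtain ⟨r, hr, hρr⟩ := Metric.nhds_basis_closedBall.eventually_iff.1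
    ((ρ.continuous.tendsto 0).eventually (lt_mem_nhds (half_lt_self hρ0)))
  obtain ⟨M, K, hM, hK, hJ⟩ := hm.exists_lintegral_distWeight_le (μ := volume) (half_pos hρ0) hr
    (hN.ofReal_mul_measure_closedBall_le hρpos hbound fun z hz => (hρr hz).le)
  obtain ⟨Φ, hΦ, hdefect⟩ := hN.exists_abs_measure_sub_setIntegral_mconv_le ρ hρpos hρint hM
  refine ⟨(Φ * K).toReal + 1, by positivity, fun Ω hΩ hNΩ => ?_⟩
  calc _ ≤ Φ * ∫⁻ y, distWeight (frontier Ω) M y ∂N := hdefect Ω hΩ hNΩ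
    _ ≤ Φ * (K * ∫⁻ x in unitThick Ω, ENNReal.ofReal (m x)) := by
        gcongr
        refine (hJ _).trans ?_
        gcongr
        exact setOf_infDist_frontier_le_one_subset_unitThick Ω
    _ ≤ _ := by
        rw [← mul_assoc]
        gcongr
        exact (ENNReal.le_ofReal_iff_toReal_le (ENNReal.mul_ne_top hΦ hK) (by positivity)).2
          (le_add_of_nonneg_right zero_le_one)

end
end

section
/- Let m be an order function on ℝ^d, let N be a tempered positive Radon measure on ℝ^d, and let ρ be a nonnegative Schwartz-class function on ℝ^d with ∫_{ℝ^d} ρ(x) dx = 1 and ρ(0) > 0, such that N*ρ(x) ≤ m(x) for all x ∈ ℝ^d. Then there exist a constant C > 0 and an exponent ν ≥ 0, independent of Ω and r, such that for every subset Ω ⊆ ℝ^d and every r ≥ 1 one has N(∂Ω^{[0,r]}) ≤ C (1 + r)^ν ∫_{∂Ω^{[−1,1]}} m(x) dx. -/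
open MeasureTheory Metric Set

noncomputable section

open Module
open scoped ENNReal NNReal Finset SchwartzMap

/-!
Since `ρ ≥ ρ 0 / 2` near `0`, the bound `N * ρ ≤ m` gives `N (closedBall y ε) ≲ m y` for a
fixed small `ε`. Cover `∂Ω^{[0,r]}` by the balls `closedBall z ε` around a maximal
`ε`-separated set of centres `z`. Each centre lies within `r + 1` of a frontier point of `Ω`,
whose unit ball sits in `∂Ω^{[-1,1]}` and in `ball z (r + 2)`; as `m` varies at most by a
factor `C (1 + r) ^ ν` on `ball z (r + 2)`, `m z` is controlled by the integral of `m` over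
that unit ball. By a volume count the balls `ball z (r + 2)` overlap at most
`O((1 + r) ^ d)` times, whence the exponent `ν + d`.
-/

namespace Metric

variable {X : Type*}

lemma exists_isSeparated_isCover [PseudoEMetricSpace X] (ε : ℝ≥0) (s : Set X) :
    ∃ N ⊆ s, IsSeparated ε N ∧ IsCover ε s N := by
  obtain ⟨N, hN⟩ : ∃ N, Maximal (fun N ↦ N ⊆ s ∧ IsSeparated ε N) N :=
    zorn_subset _ fun c hc hchain ↦ ⟨⋃₀ c, ⟨sUnion_subset fun t ht ↦ (hc ht).1,
      (pairwise_sUnion hchain.directedOn).2 fun t ht ↦ (hc ht).2⟩, fun _ ↦ subset_sUnion_of_mem⟩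
  exact ⟨N, hN.prop.1, hN.prop.2, .of_maximal_isSeparated hN⟩

lemma IsSeparated.pairwiseDisjoint_ball [PseudoMetricSpace X] {ε : ℝ≥0} {s : Set X}
    (hs : IsSeparated ε s) : s.PairwiseDisjoint fun x ↦ ball x (ε / 2) := by
  intro a ha b hb hab
  have : (ε : ℝ≥0∞) < edist a b := hs ha hb hab
  rw [edist_dist, ← ENNReal.ofReal_coe_nnreal, ENNReal.ofReal_lt_ofReal_iff'] at this
  exact ball_disjoint_ball (by linarith)

lemma IsSeparated.countable [PseudoMetricSpace X] [TopologicalSpace.SeparableSpace X] {ε : ℝ≥0}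
    (hε : 0 < ε) {s : Set X} (hs : IsSeparated ε s) : s.Countable :=
  hs.pairwiseDisjoint_ball.countable_of_isOpen (fun _ _ ↦ isOpen_ball)
    fun _ _ ↦ nonempty_ball.2 (by positivity)

lemma IsSeparated.card_le_of_subset_ball {E : Type*} [NormedAddCommGroup E] [NormedSpace ℝ E]
    [FiniteDimensional ℝ E] {ε : ℝ≥0} (hε : 0 < ε) {F : Finset E}
    (hF : IsSeparated ε (F : Set E)) {w : E} {R : ℝ} (hR : 0 ≤ R) (hFw : (F : Set E) ⊆ ball w R) :
    (#F : ℝ) ≤ (1 + 2 * R / ε) ^ finrank ℝ E := by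
  borelize E
  set μ : Measure E := Measure.addHaar
  have hε2 : (0 : ℝ) < ε / 2 := by positivity
  have hvol : (#F : ℝ≥0∞) * μ (ball 0 (ε / 2)) ≤ μ (ball 0 (R + ε / 2)) := calc
    (#F : ℝ≥0∞) * μ (ball 0 (ε / 2)) = ∑ z ∈ F, μ (ball z (ε / 2)) := by
      simp [Measure.addHaar_ball_center]
    _ = μ (⋃ z ∈ F, ball z (ε / 2)) :=
      (measure_biUnion_finset hF.pairwiseDisjoint_ball fun _ _ ↦ measurableSet_ball).symm
    _ ≤ μ (ball w (R + ε / 2)) := measure_mono <| iUnion₂_subset fun z hz ↦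
      ball_subset_ball' (by linarith [mem_ball.1 (hFw hz)])
    _ = μ (ball 0 (R + ε / 2)) := Measure.addHaar_ball_center μ w _
  have hR' : 0 < R + ε / 2 := by linarith
  rw [Measure.addHaar_ball_of_pos μ 0 hε2, Measure.addHaar_ball_of_pos μ 0 hR', ← mul_assoc,
    ENNReal.mul_le_mul_iff_left (measure_ball_pos μ 0 one_pos).ne' measure_ball_lt_top.ne,
    ← ENNReal.ofReal_natCast, ← ENNReal.ofReal_mul (by positivity),
    ENNReal.ofReal_le_ofReal_iff (by positivity), ← le_div_iff₀ (by positivity), ← div_pow] at hvol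
  rwa [show (R + ε / 2) / (ε / 2) = 1 + 2 * R / ε by field_simp; ring] at hvol

end Metric

section Lintegral

variable {α ι : Type*} [MeasurableSpace α] (μ : Measure α)

lemma sum_lintegral_le_lintegral_sum (F : Finset ι) (f : ι → α → ℝ≥0∞) :
    ∑ i ∈ F, ∫⁻ x, f i x ∂μ ≤ ∫⁻ x, ∑ i ∈ F, f i x ∂μ := by
  induction F using Finset.cons_induction with
  | empty => simp
  | cons i F _ ih =>
    simp only [Finset.sum_cons]
    exact (add_le_add_right ih _).trans (le_lintegral_add _ _)

open scoped Classical in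
lemma sum_setLIntegral_le_mul_lintegral (F : Finset ι) {s : ι → Set α}
    (hs : ∀ i, MeasurableSet (s i)) {M : ℝ≥0∞} (hM : M ≠ ∞)
    (hmult : ∀ x, (#{i ∈ F | x ∈ s i} : ℝ≥0∞) ≤ M) (f : α → ℝ≥0∞) :
    ∑ i ∈ F, ∫⁻ x in s i, f x ∂μ ≤ M * ∫⁻ x, f x ∂μ := calc
  ∑ i ∈ F, ∫⁻ x in s i, f x ∂μ = ∑ i ∈ F, ∫⁻ x, (s i).indicator f x ∂μ := by
    simp only [lintegral_indicator (hs _)]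
  _ ≤ ∫⁻ x, ∑ i ∈ F, (s i).indicator f x ∂μ := sum_lintegral_le_lintegral_sum μ F _
  _ ≤ ∫⁻ x, M * f x ∂μ := lintegral_mono fun x ↦ by
    simp only [indicator_apply]
    rw [← Finset.sum_filter, Finset.sum_const, nsmul_eq_mul]
    exact mul_le_mul_left (hmult x) _
  _ = M * ∫⁻ x, f x ∂μ := lintegral_const_mul' _ _ hM

end Lintegral

lemma Metric.IsSeparated.tsum_setLIntegral_ball_le {E : Type*} [NormedAddCommGroup E]
    [NormedSpace ℝ E] [FiniteDimensional ℝ E] [MeasurableSpace E] [OpensMeasurableSpace E]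
    {ε : ℝ≥0} (hε : 0 < ε) {Z : Set E} (hZ : IsSeparated ε Z) {R : ℝ} (hR : 0 ≤ R)
    (μ : Measure E) (f : E → ℝ≥0∞) :
    ∑' z : Z, ∫⁻ x in ball (z : E) R, f x ∂μ ≤
      ENNReal.ofReal ((1 + 2 * R / ε) ^ finrank ℝ E) * ∫⁻ x, f x ∂μ := by
  rw [ENNReal.tsum_eq_iSup_sum]
  refine iSup_le fun F ↦ sum_setLIntegral_le_mul_lintegral μ F (fun _ ↦ measurableSet_ball)
    ENNReal.ofReal_ne_top (fun x ↦ ?_) f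
  classical
  set G := {z ∈ F | x ∈ ball z.1 R}.map (Function.Embedding.subtype (· ∈ Z))
  have hG : (G : Set E) ⊆ Z ∩ ball x R := by
    intro y hy
    simp only [G, Finset.coe_map, Function.Embedding.subtype_apply, Finset.coe_filter,
      mem_image] at hy
    obtain ⟨z, ⟨-, hz⟩, rfl⟩ := hy
    exact ⟨z.2, mem_ball_comm.1 hz⟩
  have hcard := (hZ.subset fun y hy ↦ (hG hy).1).card_le_of_subset_ball hε hR fun y hy ↦ (hG hy).2
  rw [← ENNReal.ofReal_natCast]
  exact ENNReal.ofReal_le_ofReal (by simpa [G] using hcard)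

lemma exists_ofReal_mul_measure_closedBall_le_integral {E : Type*} [NormedAddCommGroup E]
    [MeasurableSpace E] [OpensMeasurableSpace E] {N : Measure E} {ρ : E → ℝ}
    (hρ : ContinuousAt ρ 0) (hρ0 : 0 < ρ 0) (hρpos : ∀ x, 0 ≤ ρ x)
    (hint : ∀ y, Integrable (fun z ↦ ρ (y - z)) N) :
    ∃ ε : ℝ≥0, 0 < ε ∧ ∀ y, ENNReal.ofReal (ρ 0 / 2) * N (closedBall y ε) ≤
      ENNReal.ofReal (∫ z, ρ (y - z) ∂N) := by
  obtain ⟨ε, hε, hρε⟩ : ∃ ε > 0, ∀ x ∈ closedBall (0 : E) ε, ρ 0 / 2 ≤ ρ x :=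
    nhds_basis_closedBall.eventually_iff.1 <|
      hρ.eventually (eventually_ge_nhds (half_lt_self hρ0))
  refine ⟨⟨ε, hε.le⟩, hε, fun y ↦ ?_⟩
  calc ENNReal.ofReal (ρ 0 / 2) * N (closedBall y ε)
      ≤ ENNReal.ofReal (ρ 0 / 2) *
          N {z | ENNReal.ofReal (ρ 0 / 2) ≤ ENNReal.ofReal (ρ (y - z))} := by
        refine mul_le_mul_right (measure_mono fun z hz ↦ ENNReal.ofReal_le_ofReal (hρε _ ?_)) _
        rwa [mem_closedBall, dist_zero_right, ← dist_eq_norm, dist_comm]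
    _ ≤ ∫⁻ z, ENNReal.ofReal (ρ (y - z)) ∂N :=
        mul_meas_ge_le_lintegral₀ (hint y).aemeasurable.ennreal_ofReal _
    _ = ENNReal.ofReal (∫ z, ρ (y - z) ∂N) :=
        (ofReal_integral_eq_lintegral_ofReal (hint y) (ae_of_all _ fun z ↦ hρpos _)).symm

lemma SchwartzMap.integrable_comp_sub_left {E : Type*} [NormedAddCommGroup E] [NormedSpace ℝ E]
    [MeasurableSpace E] [BorelSpace E] [SecondCountableTopology E] {μ : Measure E}
    [μ.HasTemperateGrowth] (f : 𝓢(E, ℝ)) (y : E) : Integrable (fun z ↦ f (y - z)) μ := by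
  convert (compSubConstCLM ℝ y (compCLMOfContinuousLinearEquiv ℝ (.neg ℝ) f)).integrable (μ := μ)
    using 1
  ext z
  simp

lemma IsTempered.hasTemperateGrowth {d : ℕ} {N : Measure (EuclideanSpace ℝ (Fin d))}
    (hN : IsTempered N) : N.HasTemperateGrowth := by
  obtain ⟨k, -, hk⟩ := hN
  have hcont (s : ℝ) : Continuous fun x : EuclideanSpace ℝ (Fin d) ↦ (1 + ‖x‖) ^ (-s) :=
    (continuous_const.add continuous_norm).rpow_const fun x ↦ .inl (by positivity : 1 + ‖x‖ ≠ 0)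
  have hint : Integrable (fun x ↦ (1 + ‖x‖) ^ (-k)) N :=
    (lintegral_ofReal_ne_top_iff_integrable (hcont k).aestronglyMeasurable
      (ae_of_all _ fun _ ↦ by positivity)).1 hk.ne
  refine ⟨⌈k⌉₊, hint.mono' (hcont _).aestronglyMeasurable (ae_of_all _ fun x ↦ ?_)⟩
  rw [Real.norm_of_nonneg (by positivity)]
  exact Real.rpow_le_rpow_of_exponent_le (by simp) (by simpa using Nat.le_ceil k)

section Boundary

variable {d : ℕ} {Ω : Set (EuclideanSpace ℝ (Fin d))}

lemma mem_unitThick_of_infDist_le {x : EuclideanSpace ℝ (Fin d)} (h : infDist x Ω ≤ 1)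
    (hc : infDist x Ωᶜ ≤ 1) : x ∈ unitThick Ω := by
  by_cases hx : x ∈ closure Ω
  · exact .inl ⟨hx, infDist_nonneg, hc⟩
  · exact .inr ⟨subset_closure fun hxΩ ↦ hx (subset_closure hxΩ), infDist_nonneg, h⟩

lemma ball_subset_unitThick_of_mem_frontier {q : EuclideanSpace ℝ (Fin d)}
    (hq : q ∈ frontier Ω) : ball q 1 ⊆ unitThick Ω := by
  rw [frontier_eq_closure_inter_closure] at hq
  intro x hx
  have hdist {s : Set (EuclideanSpace ℝ (Fin d))} (hs : q ∈ closure s) : infDist x s ≤ 1 := by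
    linarith [infDist_le_infDist_add_dist (s := s) (x := x) (y := q),
      infDist_zero_of_mem_closure hs, mem_ball.1 hx]
  exact mem_unitThick_of_infDist_le (hdist hq.1) (hdist hq.2)

lemma exists_ball_subset_unitThick_inter_ball {r : ℝ} {z : EuclideanSpace ℝ (Fin d)}
    (hz : z ∈ outerThick Ω 0 r) : ∃ q, ball q 1 ⊆ unitThick Ω ∩ ball z (r + 2) := by
  obtain ⟨hzc, -, hzr⟩ := hz
  rcases Ω.eq_empty_or_nonempty with rfl | hΩ
  -- `unitThick ∅ = univ`
  · refine ⟨z, fun x hx ↦ ⟨.inr ⟨by simp, by simp, by simp⟩, ?_⟩⟩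
    simp only [infDist_empty] at hzr
    exact ball_subset_ball (by linarith) hx
  obtain ⟨p, hpΩ, hzp⟩ := (infDist_lt_iff hΩ).1 (hzr.trans_lt (lt_add_one r))
  obtain ⟨q, hqzp, hq⟩ : (segment ℝ z p ∩ (closure Ωᶜ ∩ closure Ω)).Nonempty :=
    isPreconnected_closed_iff.1 (convex_segment z p).isPreconnected _ _ isClosed_closure
      isClosed_closure (fun x _ ↦ (em (x ∈ Ω)).symm.imp (subset_closure ·) (subset_closure ·))
      ⟨z, left_mem_segment ℝ z p, hzc⟩ ⟨p, right_mem_segment ℝ z p, subset_closure hpΩ⟩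
  refine ⟨q, subset_inter (ball_subset_unitThick_of_mem_frontier ?_) (ball_subset_ball' ?_)⟩
  · rw [frontier_eq_closure_inter_closure]
    exact ⟨hq.2, hq.1⟩
  · linarith [mem_closedBall.1 (segment_subset_closedBall_left z p hqzp)]

end Boundary

section Covering

variable {E : Type*} [NormedAddCommGroup E] [MeasurableSpace E] {m : E → ℝ} {C₀ ν : ℝ}

lemma ofReal_mul_measure_le_mul_setLIntegral (μ : Measure E) (hm0 : ∀ x, 0 ≤ m x)
    (hC₀ : 0 ≤ C₀) (hν : 0 ≤ ν) (hm : ∀ x y, m x ≤ C₀ * (1 + ‖x - y‖) ^ ν * m y) {z : E}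
    {R : ℝ} {t : Set E} (ht : MeasurableSet t) (htz : t ⊆ ball z R) :
    ENNReal.ofReal (m z) * μ t ≤
      ENNReal.ofReal (C₀ * (1 + R) ^ ν) * ∫⁻ x in t, ENNReal.ofReal (m x) ∂μ := calc
  ENNReal.ofReal (m z) * μ t = ∫⁻ _ in t, ENNReal.ofReal (m z) ∂μ := (setLIntegral_const _ _).symm
  _ ≤ ∫⁻ x in t, ENNReal.ofReal (C₀ * (1 + R) ^ ν) * ENNReal.ofReal (m x) ∂μ := by
    refine setLIntegral_mono' ht fun x hx ↦ ?_
    rw [← ENNReal.ofReal_mul' (hm0 x)]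
    refine ENNReal.ofReal_le_ofReal ((hm z x).trans ?_)
    have : ‖z - x‖ ≤ R := by rw [← dist_eq_norm, dist_comm]; exact (htz hx).out.le
    gcongr
    exact hm0 x
  _ = ENNReal.ofReal (C₀ * (1 + R) ^ ν) * ∫⁻ x in t, ENNReal.ofReal (m x) ∂μ :=
    lintegral_const_mul' _ _ ENNReal.ofReal_ne_top

variable [NormedSpace ℝ E] [FiniteDimensional ℝ E] [BorelSpace E] (μ : Measure E)
  [μ.IsAddHaarMeasure] {N : Measure E} {a : ℝ} {ε : ℝ≥0} {δ R : ℝ} {T : Set E}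

lemma ofReal_mul_measure_closedBall_le_setLIntegral (hm0 : ∀ x, 0 ≤ m x) (hC₀ : 0 ≤ C₀)
    (hν : 0 ≤ ν) (hm : ∀ x y, m x ≤ C₀ * (1 + ‖x - y‖) ^ ν * m y) (ha : 0 ≤ a)
    (hN : ∀ y, ENNReal.ofReal a * N (closedBall y ε) ≤ ENNReal.ofReal (m y)) {z q : E}
    (hq : ball q δ ⊆ T ∩ ball z R) :
    ENNReal.ofReal (a * μ.real (ball 0 δ)) * N (closedBall z ε) ≤
      ENNReal.ofReal (C₀ * (1 + R) ^ ν) * ∫⁻ x in ball z R, ENNReal.ofReal (m x) ∂μ.restrict T :=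
  calc ENNReal.ofReal (a * μ.real (ball 0 δ)) * N (closedBall z ε)
      = ENNReal.ofReal a * N (closedBall z ε) * μ (ball q δ) := by
        rw [Measure.addHaar_ball_center, ← ofReal_measureReal measure_ball_lt_top.ne,
          ENNReal.ofReal_mul ha]
        ring
    _ ≤ ENNReal.ofReal (m z) * μ (ball q δ) := by gcongr; exact hN z
    _ ≤ ENNReal.ofReal (C₀ * (1 + R) ^ ν) * ∫⁻ x in ball q δ, ENNReal.ofReal (m x) ∂μ :=
        ofReal_mul_measure_le_mul_setLIntegral μ hm0 hC₀ hν hm measurableSet_ball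
          (hq.trans inter_subset_right)
    _ ≤ ENNReal.ofReal (C₀ * (1 + R) ^ ν) *
          ∫⁻ x in ball z R, ENNReal.ofReal (m x) ∂μ.restrict T := by
        refine mul_le_mul_right (lintegral_mono' ?_ le_rfl) _
        rw [Measure.restrict_restrict measurableSet_ball]
        exact Measure.restrict_mono (hq.trans (inter_comm _ _).subset) le_rfl

lemma ofReal_mul_measure_le_setLIntegral_of_forall_exists_ball (hm0 : ∀ x, 0 ≤ m x)
    (hC₀ : 0 ≤ C₀) (hν : 0 ≤ ν) (hm : ∀ x y, m x ≤ C₀ * (1 + ‖x - y‖) ^ ν * m y) (ha : 0 ≤ a)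
    (hε : 0 < ε) (hN : ∀ y, ENNReal.ofReal a * N (closedBall y ε) ≤ ENNReal.ofReal (m y))
    (hR : 0 ≤ R) {S : Set E} (hST : ∀ z ∈ S, ∃ q, ball q δ ⊆ T ∩ ball z R) :
    ENNReal.ofReal (a * μ.real (ball 0 δ)) * N S ≤ ENNReal.ofReal (C₀ * (1 + R) ^ ν) *
      (ENNReal.ofReal ((1 + 2 * R / ε) ^ finrank ℝ E) * ∫⁻ x in T, ENNReal.ofReal (m x) ∂μ) := by
  obtain ⟨Z, hZS, hZsep, hZcov⟩ := exists_isSeparated_isCover ε S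
  calc ENNReal.ofReal (a * μ.real (ball 0 δ)) * N S
      ≤ ENNReal.ofReal (a * μ.real (ball 0 δ)) * ∑' z : Z, N (closedBall z ε) := by
        gcongr
        exact (measure_mono hZcov.subset_iUnion_closedBall).trans
          (measure_biUnion_le N (hZsep.countable hε) _)
    _ ≤ ∑' z : Z, ENNReal.ofReal (C₀ * (1 + R) ^ ν) *
          ∫⁻ x in ball (z : E) R, ENNReal.ofReal (m x) ∂μ.restrict T := by
        rw [← ENNReal.tsum_mul_left]
        refine ENNReal.tsum_le_tsum fun z ↦ ?_
        obtain ⟨q, hq⟩ := hST z (hZS z.2)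
        exact ofReal_mul_measure_closedBall_le_setLIntegral μ hm0 hC₀ hν hm ha hN hq
    _ ≤ _ := by
        rw [ENNReal.tsum_mul_left]
        gcongr
        exact hZsep.tsum_setLIntegral_ball_le hε hR _ _

theorem exists_measure_le_mul_setLIntegral (hm0 : ∀ x, 0 ≤ m x) (hC₀ : 0 < C₀) (hν : 0 ≤ ν)
    (hm : ∀ x y, m x ≤ C₀ * (1 + ‖x - y‖) ^ ν * m y) (ha : 0 < a) (hε : 0 < ε)
    (hN : ∀ y, ENNReal.ofReal a * N (closedBall y ε) ≤ ENNReal.ofReal (m y)) (hδ : 0 < δ) :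
    ∃ K > 0, ∀ ⦃S T : Set E⦄ ⦃R : ℝ⦄, 0 ≤ R → (∀ z ∈ S, ∃ q, ball q δ ⊆ T ∩ ball z R) →
      N S ≤ ENNReal.ofReal (K * (1 + R) ^ (ν + finrank ℝ E)) *
        ∫⁻ x in T, ENNReal.ofReal (m x) ∂μ := by
  set d := finrank ℝ E
  set V := μ.real (ball 0 δ)
  have hV : 0 < V := ENNReal.toReal_pos (measure_ball_pos μ 0 hδ).ne' measure_ball_lt_top.ne
  refine ⟨C₀ * (1 + 2 / ε) ^ d / (a * V), by positivity, fun S T R hR hST ↦ ?_⟩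
  have hmul := ofReal_mul_measure_le_setLIntegral_of_forall_exists_ball μ hm0 hC₀.le hν hm ha.le
    hε hN hR hST
  rw [← ENNReal.mul_le_mul_iff_right (a := ENNReal.ofReal (a * V))
    (ENNReal.ofReal_pos.2 (by positivity)).ne' ENNReal.ofReal_ne_top]
  refine hmul.trans ?_
  rw [← mul_assoc, ← mul_assoc, ← ENNReal.ofReal_mul (by positivity),
    ← ENNReal.ofReal_mul (by positivity)]
  gcongr ENNReal.ofReal ?_ * _
  have hbase : 1 + 2 * R / ε ≤ (1 + 2 / ε) * (1 + R) := by
    have : 0 ≤ 2 / (ε : ℝ) := by positivity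
    nlinarith [div_mul_eq_mul_div 2 (ε : ℝ) R]
  rw [Real.rpow_add (by positivity), Real.rpow_natCast]
  calc C₀ * (1 + R) ^ ν * (1 + 2 * R / ε) ^ d
      ≤ C₀ * (1 + R) ^ ν * ((1 + 2 / ε) ^ d * (1 + R) ^ d) := by rw [← mul_pow]; gcongr
    _ = a * V * (C₀ * (1 + 2 / ε) ^ d / (a * V) * ((1 + R) ^ ν * (1 + R) ^ d)) := by
      field_simp

end Covering

theorem measure_outer_thickening_bound_general {d : ℕ} (m : EuclideanSpace ℝ (Fin d) → ℝ)
    (hm : IsOrderFunction m)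
    (N : Measure (EuclideanSpace ℝ (Fin d)))
    (hN : IsTempered N)
    (ρ : SchwartzMap (EuclideanSpace ℝ (Fin d)) ℝ)
    (hρpos : ∀ x, 0 ≤ ρ x) (hρ0 : 0 < ρ 0)
    (hbound : ∀ x, mconv N (fun z => ρ z) x ≤ m x) :
    ∃ C ν : ℝ, 0 < C ∧ 0 ≤ ν ∧
      ∀ (Ω : Set (EuclideanSpace ℝ (Fin d))) (r : ℝ), 1 ≤ r →
        N (outerThick Ω 0 r) ≤
          ENNReal.ofReal (C * (1 + r) ^ ν) *
            ∫⁻ x in unitThick Ω, ENNReal.ofReal (m x) := by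
  obtain ⟨hmpos, C₀, ν, hC₀, hν, hm⟩ := hm
  have := hN.hasTemperateGrowth
  obtain ⟨ε, hε, hball⟩ := exists_ofReal_mul_measure_closedBall_le_integral
    ρ.continuous.continuousAt hρ0 hρpos (ρ.integrable_comp_sub_left (μ := N))
  obtain ⟨K, hK, hcover⟩ := exists_measure_le_mul_setLIntegral volume (fun x ↦ (hmpos x).le)
    hC₀ hν hm (half_pos hρ0) hε (fun y ↦ (hball y).trans (ENNReal.ofReal_le_ofReal (hbound y)))
    one_pos
  set D : ℝ := ν + finrank ℝ (EuclideanSpace ℝ (Fin d))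
  refine ⟨K * 3 ^ D, D, by positivity, by positivity, fun Ω r hr ↦ ?_⟩
  calc N (outerThick Ω 0 r)
      ≤ ENNReal.ofReal (K * (1 + (r + 2)) ^ D) * ∫⁻ x in unitThick Ω, ENNReal.ofReal (m x) :=
        hcover (by linarith) fun z hz ↦ exists_ball_subset_unitThick_inter_ball hz
    _ ≤ ENNReal.ofReal (K * 3 ^ D * (1 + r) ^ D) * ∫⁻ x in unitThick Ω, ENNReal.ofReal (m x) := by
        gcongr ENNReal.ofReal ?_ * _
        rw [mul_assoc, ← Real.mul_rpow (by norm_num) (by linarith)]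
        gcongr
        linarith

/-- The measure of the outer `r`-thickening of the boundary of `Ω` is controlled by the
integral of the order function over the unit thickening of the boundary. -/
theorem measure_outer_thickening_bound {d : ℕ} (m : EuclideanSpace ℝ (Fin d) → ℝ)
    (hm : IsOrderFunction m)
    (N : Measure (EuclideanSpace ℝ (Fin d))) [IsLocallyFiniteMeasure N]
    (hN : IsTempered N)
    (ρ : SchwartzMap (EuclideanSpace ℝ (Fin d)) ℝ)
    (hρpos : ∀ x, 0 ≤ ρ x) (hρint : ∫ x, ρ x = 1) (hρ0 : 0 < ρ 0)
    (hbound : ∀ x, mconv N (fun z => ρ z) x ≤ m x) :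
    ∃ C ν : ℝ, 0 < C ∧ 0 ≤ ν ∧
      ∀ (Ω : Set (EuclideanSpace ℝ (Fin d))) (r : ℝ), 1 ≤ r →
        N (outerThick Ω 0 r) ≤
          ENNReal.ofReal (C * (1 + r) ^ ν) *
            ∫⁻ x in unitThick Ω, ENNReal.ofReal (m x) :=
  measure_outer_thickening_bound_general m hm N hN ρ hρpos hρ0 hbound

end
end

section
/- Let m be an order function on ℝ^d, let N be a tempered positive Radon measure on ℝ^d, and let ρ be a nonnegative Schwartz-class function on ℝ^d with ∫_{ℝ^d} ρ(x) dx = 1 and ρ(0) > 0, such that N*ρ(x) ≤ m(x) for all x ∈ ℝ^d. Then there exists a constant C > 0, independent of Ω, such that for every Borel set Ω ⊆ ℝ^d one has ∫_Ω ∫_{Ωᶜ} ρ(x − y) dN(y) dx ≤ C ∫_{∂Ω^{[−1,1]}} m(x) dx. -/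
/-!
For `x ∈ Ω` and `y ∉ Ω` the segment `[x, y]` meets `frontier Ω` at some `z`, and the unit ball
around `z` lies in `unitThick Ω` and is seen from `x` at distance at most `|x - y| + 1`. Averaging
over this ball, the rapid decay of `ρ (x - y)` is traded for a product of decaying kernels
`(1 + |x - y|)^{-K} (1 + |x - w|)^{-K'}` with `w ∈ unitThick Ω`.

Since `ρ ≥ ρ 0 / 2` near `0`, the bound `N * ρ ≤ m` controls `N` on small balls by `m`; averaging
over these balls and using the polynomial growth of `m` controls the moments
`M x = ∫ (1 + |x - y|)^{-K} dN(y)` by `m x`. Peetre's inequality moves `M x` to `M w`, and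
integrating out `x` leaves a constant times `∫_{unitThick Ω} m`.
-/

open MeasureTheory Metric Set

noncomputable section

open Module
open scoped ENNReal

section DecayKernel

variable {X : Type*} [PseudoMetricSpace X]

def decayKernel (p : ℕ) (x y : X) : ℝ≥0∞ :=
  ENNReal.ofReal ((1 + dist x y) ^ p)⁻¹

lemma decayKernel_comm (p : ℕ) (x y : X) : decayKernel p x y = decayKernel p y x := by
  rw [decayKernel, decayKernel, dist_comm]

lemma decayKernel_ne_top (p : ℕ) (x y : X) : decayKernel p x y ≠ ⊤ :=
  ENNReal.ofReal_ne_top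

lemma decayKernel_add (p q : ℕ) (x y : X) :
    decayKernel (p + q) x y = decayKernel p x y * decayKernel q x y := by
  rw [decayKernel, decayKernel, decayKernel, ← ENNReal.ofReal_mul (by positivity), pow_add,
    mul_inv]

lemma decayKernel_mul_ofReal_pow (p : ℕ) (x y : X) :
    decayKernel p x y * ENNReal.ofReal ((1 + dist x y) ^ p) = 1 := by
  rw [decayKernel, ← ENNReal.ofReal_mul (by positivity), inv_mul_cancel₀ (by positivity),
    ENNReal.ofReal_one]

lemma decayKernel_le_ofReal_pow_mul {p : ℕ} {x y x' y' : X} {c : ℝ} (hc : 0 ≤ c)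
    (h : 1 + dist x' y' ≤ c * (1 + dist x y)) :
    decayKernel p x y ≤ ENNReal.ofReal (c ^ p) * decayKernel p x' y' := by
  rw [decayKernel, decayKernel, ← ENNReal.ofReal_mul (by positivity)]
  refine ENNReal.ofReal_le_ofReal ?_
  rw [← div_eq_mul_inv, le_div_iff₀ (by positivity), inv_mul_le_iff₀ (by positivity), ← mul_pow,
    mul_comm]
  exact pow_le_pow_left₀ (by positivity) h p

lemma decayKernel_mul_decayKernel_le (p : ℕ) (x y z : X) :
    decayKernel p x y * decayKernel p x z ≤ decayKernel p y z := by
  have h : 1 + dist y z ≤ (1 + dist x y) * (1 + dist x z) := by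
    nlinarith [dist_triangle_left y z x, dist_nonneg (x := x) (y := y),
      dist_nonneg (x := x) (y := z)]
  calc decayKernel p x y * decayKernel p x z
      ≤ decayKernel p x y * (ENNReal.ofReal ((1 + dist x y) ^ p) * decayKernel p y z) := by
        gcongr
        exact decayKernel_le_ofReal_pow_mul (by positivity) h
    _ = decayKernel p y z := by
        rw [← mul_assoc, decayKernel_mul_ofReal_pow, one_mul]

lemma continuous_decayKernel (p : ℕ) : Continuous fun q : X × X => decayKernel p q.1 q.2 :=
  ENNReal.continuous_ofReal.comp <|
    ((continuous_const.add continuous_dist).pow p).inv₀ fun _ =>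
      pow_ne_zero _ (add_pos_of_pos_of_nonneg one_pos dist_nonneg).ne'

lemma measurable_decayKernel_right [MeasurableSpace X] [OpensMeasurableSpace X] (p : ℕ)
    (x : X) : Measurable (decayKernel p x) :=
  ((continuous_decayKernel p).comp (Continuous.prodMk_right x)).measurable

lemma decayKernel_mul_lintegral_decayKernel_le [MeasurableSpace X] (N : Measure X) (p : ℕ)
    (x w : X) :
    decayKernel p x w * ∫⁻ y, decayKernel p x y ∂N ≤ ∫⁻ y, decayKernel p w y ∂N := by
  rw [← lintegral_const_mul' _ _ (decayKernel_ne_top p x w)]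
  exact lintegral_mono fun y => decayKernel_mul_decayKernel_le p x w y

end DecayKernel

lemma IsOrderFunction.exists_decayKernel_mul_le {E : Type*} [NormedAddCommGroup E] {m : E → ℝ}
    (hm : IsOrderFunction m) :
    ∃ (C : ℝ≥0∞) (ν : ℕ), C ≠ ⊤ ∧
      ∀ x y, decayKernel ν x y * ENNReal.ofReal (m x) ≤ C * ENNReal.ofReal (m y) := by
  obtain ⟨hpos, C, ν, hC, -, h⟩ := hm
  refine ⟨ENNReal.ofReal C, ⌈ν⌉₊, ENNReal.ofReal_ne_top, fun x y => ?_⟩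
  have hnat : m x ≤ C * (1 + dist x y) ^ ⌈ν⌉₊ * m y := by
    refine (h x y).trans ?_
    rw [← dist_eq_norm, ← Real.rpow_natCast]
    have := (hpos y).le
    gcongr
    · exact le_add_of_nonneg_right dist_nonneg
    · exact Nat.le_ceil ν
  calc decayKernel ⌈ν⌉₊ x y * ENNReal.ofReal (m x)
      ≤ decayKernel ⌈ν⌉₊ x y * ENNReal.ofReal (C * (1 + dist x y) ^ ⌈ν⌉₊ * m y) := by gcongr
    _ = ENNReal.ofReal C * ENNReal.ofReal (m y) *
          (decayKernel ⌈ν⌉₊ x y * ENNReal.ofReal ((1 + dist x y) ^ ⌈ν⌉₊)) := by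
        rw [ENNReal.ofReal_mul (by positivity), ENNReal.ofReal_mul hC.le]
        ring
    _ = ENNReal.ofReal C * ENNReal.ofReal (m y) := by rw [decayKernel_mul_ofReal_pow, mul_one]

lemma lintegral_setLIntegral_closedBall {X : Type*} [PseudoMetricSpace X]
    [SecondCountableTopology X] [MeasurableSpace X] [OpensMeasurableSpace X]
    (μ ν : Measure X) [SFinite μ] [SFinite ν] {f : X → ℝ≥0∞} (hf : Measurable f) (r : ℝ) :
    ∫⁻ y, ∫⁻ u in closedBall y r, f u ∂μ ∂ν = ∫⁻ u, f u * ν (closedBall u r) ∂μ := by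
  set S : Set (X × X) := {q | dist q.2 q.1 ≤ r}
  have hS : MeasurableSet S := measurableSet_le (by fun_prop) measurable_const
  calc ∫⁻ y, ∫⁻ u in closedBall y r, f u ∂μ ∂ν
      = ∫⁻ y, ∫⁻ u, S.indicator (fun q => f q.2) (y, u) ∂μ ∂ν := by
        refine lintegral_congr fun y => ?_
        rw [← lintegral_indicator measurableSet_closedBall]
        rfl
    _ = ∫⁻ u, ∫⁻ y, S.indicator (fun q => f q.2) (y, u) ∂ν ∂μ :=
        lintegral_lintegral_swap ((hf.comp measurable_snd).indicator hS).aemeasurable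
    _ = ∫⁻ u, f u * ν (closedBall u r) ∂μ := by
        refine lintegral_congr fun u => ?_
        rw [← lintegral_indicator_const measurableSet_closedBall]
        refine lintegral_congr fun y => ?_
        simp [S, indicator, dist_comm y u]

lemma IsPreconnected.inter_frontier_nonempty {X : Type*} [TopologicalSpace X] {s t : Set X}
    (hs : IsPreconnected s) (hst : (s ∩ t).Nonempty) (hst' : (s \ t).Nonempty) :
    (s ∩ frontier t).Nonempty := by
  by_contra! h
  have hcover : s ⊆ interior t ∪ (closure t)ᶜ := fun x hx => by
    by_contra hx'
    simp only [mem_union, mem_compl_iff, not_or, not_not] at hx'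
    exact h.subset ⟨hx, hx'.2, hx'.1⟩
  obtain ⟨x, hxs, hxt⟩ := hst
  obtain ⟨y, hys, hyt⟩ := hst'
  obtain ⟨z, -, hzi, hzc⟩ := hs _ _ isOpen_interior isClosed_closure.isOpen_compl hcover
    ⟨x, hxs, (hcover hxs).resolve_right fun hx => hx (subset_closure hxt)⟩
    ⟨y, hys, (hcover hys).resolve_left fun hy => hyt (interior_subset hy)⟩
  exact hzc (subset_closure (interior_subset hzi))

lemma exists_mem_frontier_dist_le {E : Type*} [NormedAddCommGroup E] [NormedSpace ℝ E]
    {s : Set E} {x y : E} (hx : x ∈ s) (hy : y ∉ s) : ∃ z ∈ frontier s, dist x z ≤ dist x y := by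
  obtain ⟨z, hzxy, hzs⟩ := (convex_segment x y).isPreconnected.inter_frontier_nonempty
    ⟨x, left_mem_segment ℝ x y, hx⟩ ⟨y, right_mem_segment ℝ x y, hy⟩
  exact ⟨z, hzs, by linarith [dist_add_dist_of_mem_segment hzxy, dist_nonneg (x := z) (y := y)]⟩

lemma lintegral_decayKernel_eq {E : Type*} [NormedAddCommGroup E] [MeasurableSpace E]
    [MeasurableAdd E] (μ : Measure E) [μ.IsAddRightInvariant] (p : ℕ) (x : E) :
    ∫⁻ y, decayKernel p x y ∂μ = ∫⁻ y, decayKernel p 0 y ∂μ := by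
  rw [← lintegral_sub_right_eq_self (decayKernel p 0) x]
  simp only [decayKernel, dist_zero_left, ← dist_eq_norm, dist_comm x]

lemma lintegral_decayKernel_lt_top {E : Type*} [NormedAddCommGroup E] [NormedSpace ℝ E]
    [FiniteDimensional ℝ E] [MeasurableSpace E] [BorelSpace E] (μ : Measure E)
    [μ.IsAddHaarMeasure] {p : ℕ} (hp : finrank ℝ E < p) (x : E) :
    ∫⁻ y, decayKernel p x y ∂μ < ⊤ := by
  have hint := (integrable_one_add_norm (μ := μ) (r := p) (by exact_mod_cast hp)).hasFiniteIntegral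
  rw [lintegral_decayKernel_eq]
  refine lt_of_le_of_lt (lintegral_mono fun y => ?_) hint
  show _ ≤ ‖(1 + ‖y‖) ^ (-(p : ℝ))‖ₑ
  rw [decayKernel, dist_zero_left, Real.rpow_neg (by positivity), Real.rpow_natCast]
  exact Real.ofReal_le_enorm _

lemma SchwartzMap.exists_enorm_sub_le_decayKernel {E F : Type*} [NormedAddCommGroup E]
    [NormedSpace ℝ E] [NormedAddCommGroup F] [NormedSpace ℝ F] (f : SchwartzMap E F) (n : ℕ) :
    ∃ D : ℝ≥0∞, D ≠ ⊤ ∧ ∀ x y, ‖f (x - y)‖ₑ ≤ D * decayKernel n x y := by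
  set S := 2 ^ n * (Finset.Iic (n, 0)).sup (fun m => SchwartzMap.seminorm ℝ m.1 m.2) f
  refine ⟨ENNReal.ofReal S, ENNReal.ofReal_ne_top, fun x y => ?_⟩
  have h := one_add_le_sup_seminorm_apply (𝕜 := ℝ) (m := (n, 0)) le_rfl le_rfl f (x - y)
  rw [norm_iteratedFDeriv_zero, ← le_div_iff₀' (by positivity), div_eq_mul_inv] at h
  rw [decayKernel, ← ENNReal.ofReal_mul (by positivity), dist_eq_norm, ← ofReal_norm]
  exact ENNReal.ofReal_le_ofReal h

theorem exists_lintegral_decayKernel_le {E : Type*} [NormedAddCommGroup E] [NormedSpace ℝ E]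
    [FiniteDimensional ℝ E] [MeasurableSpace E] [BorelSpace E] (N : Measure E) [SFinite N]
    {w : E → ℝ≥0∞} {C c : ℝ≥0∞} {ν p : ℕ} (hC : C ≠ ⊤) (hc : c ≠ ⊤)
    (hw : ∀ x y, decayKernel ν x y * w x ≤ C * w y) {r : ℝ} (hr : 0 < r)
    (hN : ∀ u, N (closedBall u r) ≤ c * w u) (hp : finrank ℝ E < p) :
    ∃ B : ℝ≥0∞, B ≠ ⊤ ∧ ∀ x, ∫⁻ y, decayKernel (ν + p) x y ∂N ≤ B * w x := by
  set μ : Measure E := Measure.addHaar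
  set v := μ (closedBall 0 r)
  set e := ENNReal.ofReal ((1 + r) ^ (ν + p))
  set J := ∫⁻ y, decayKernel p 0 y ∂μ
  have hv : v ≠ 0 := (measure_closedBall_pos μ 0 hr).ne'
  have hJ : J ≠ ⊤ := (lintegral_decayKernel_lt_top μ hp 0).ne
  refine ⟨e * c * C * J / v, ENNReal.div_ne_top (by finiteness) hv, fun x => ?_⟩
  have hball : ∀ y, decayKernel (ν + p) x y * v ≤
      ∫⁻ u in closedBall y r, e * decayKernel (ν + p) x u ∂μ := fun y => by
    rw [show v = μ (closedBall y r) from (μ.addHaar_closedBall_center y r).symm,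
      ← setLIntegral_const]
    refine setLIntegral_mono ((measurable_decayKernel_right _ x).const_mul e) fun u hu => ?_
    exact decayKernel_le_ofReal_pow_mul (by positivity) (by
      nlinarith [dist_triangle x y u, mem_closedBall'.1 hu, dist_nonneg (x := x) (y := y)])
  have hmass : ∀ u, e * decayKernel (ν + p) x u * N (closedBall u r) ≤
      e * c * C * (decayKernel p x u * w x) := fun u => by
    calc e * decayKernel (ν + p) x u * N (closedBall u r)
        ≤ e * (decayKernel p x u * decayKernel ν u x) * (c * w u) := by
          rw [decayKernel_add, mul_comm (decayKernel ν x u), decayKernel_comm ν x u]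
          gcongr
          exact hN u
      _ = e * c * (decayKernel p x u * (decayKernel ν u x * w u)) := by ring
      _ ≤ e * c * (decayKernel p x u * (C * w x)) := by
          gcongr e * c * (decayKernel p x u * ?_)
          exact hw u x
      _ = e * c * C * (decayKernel p x u * w x) := by ring
  rw [div_eq_mul_inv, mul_right_comm, ← div_eq_mul_inv,
    ENNReal.le_div_iff_mul_le (Or.inl hv) (Or.inl measure_closedBall_lt_top.ne)]
  calc (∫⁻ y, decayKernel (ν + p) x y ∂N) * v = ∫⁻ y, decayKernel (ν + p) x y * v ∂N :=
        (lintegral_mul_const _ (measurable_decayKernel_right _ x)).symm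
    _ ≤ ∫⁻ y, ∫⁻ u in closedBall y r, e * decayKernel (ν + p) x u ∂μ ∂N := lintegral_mono hball
    _ = ∫⁻ u, e * decayKernel (ν + p) x u * N (closedBall u r) ∂μ :=
        lintegral_setLIntegral_closedBall μ N ((measurable_decayKernel_right _ x).const_mul e) r
    _ ≤ ∫⁻ u, e * c * C * (decayKernel p x u * w x) ∂μ := lintegral_mono hmass
    _ = e * c * C * J * w x := by
        rw [lintegral_const_mul' _ _ (by finiteness),
          lintegral_mul_const _ (measurable_decayKernel_right _ x), lintegral_decayKernel_eq]
        ring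

section Euclidean

variable {d : ℕ}

lemma IsTempered.integrable_comp_sub {N : Measure (EuclideanSpace ℝ (Fin d))} (hN : IsTempered N)
    (ρ : SchwartzMap (EuclideanSpace ℝ (Fin d)) ℝ) (u : EuclideanSpace ℝ (Fin d)) :
    Integrable (fun y => ρ (u - y)) N := by
  obtain ⟨k, -, hk⟩ := hN
  obtain ⟨D, hD, hρ⟩ := ρ.exists_enorm_sub_le_decayKernel ⌈k⌉₊
  have hdecay : ∀ y, decayKernel ⌈k⌉₊ u y ≤
      ENNReal.ofReal ((1 + ‖u‖) ^ ⌈k⌉₊) * ENNReal.ofReal ((1 + ‖y‖) ^ (-k)) := fun y => by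
    refine (decayKernel_le_ofReal_pow_mul (c := 1 + ‖u‖) (x' := 0) (y' := y)
      (by positivity) ?_).trans ?_
    · rw [dist_zero_left]
      nlinarith [norm_le_norm_add_norm_sub' y u, norm_nonneg u, dist_nonneg (x := u) (y := y),
        dist_eq_norm u y, norm_sub_rev u y]
    · gcongr
      rw [decayKernel, dist_zero_left, Real.rpow_neg (by positivity : (0 : ℝ) ≤ 1 + ‖y‖),
        ← Real.rpow_natCast]
      exact ENNReal.ofReal_le_ofReal (inv_anti₀ (by positivity)
        (Real.rpow_le_rpow_of_exponent_le (le_add_of_nonneg_right (norm_nonneg y)) (Nat.le_ceil k)))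
  refine ⟨(ρ.continuous.comp (continuous_const.sub continuous_id)).aestronglyMeasurable, ?_⟩
  calc ∫⁻ y, ‖ρ (u - y)‖ₑ ∂N
      ≤ ∫⁻ y, D * ENNReal.ofReal ((1 + ‖u‖) ^ ⌈k⌉₊) * ENNReal.ofReal ((1 + ‖y‖) ^ (-k)) ∂N :=
        lintegral_mono fun y => (hρ u y).trans (by rw [mul_assoc]; gcongr; exact hdecay y)
    _ < ⊤ := by
        rw [lintegral_const_mul' _ _ (by finiteness)]
        exact ENNReal.mul_lt_top (by finiteness) hk

lemma IsTempered.lintegral_ofReal_comp_sub {N : Measure (EuclideanSpace ℝ (Fin d))}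
    (hN : IsTempered N) {ρ : SchwartzMap (EuclideanSpace ℝ (Fin d)) ℝ} (hρ : ∀ x, 0 ≤ ρ x)
    (u : EuclideanSpace ℝ (Fin d)) :
    ∫⁻ y, ENNReal.ofReal (ρ (u - y)) ∂N = ENNReal.ofReal (mconv N ρ u) :=
  (ofReal_integral_eq_lintegral_ofReal (hN.integrable_comp_sub ρ u)
    (ae_of_all _ fun _ => hρ _)).symm

lemma IsTempered.exists_measure_closedBall_le {N : Measure (EuclideanSpace ℝ (Fin d))}
    (hN : IsTempered N) {ρ : SchwartzMap (EuclideanSpace ℝ (Fin d)) ℝ} (hρ : ∀ x, 0 ≤ ρ x)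
    (hρ0 : 0 < ρ 0) :
    ∃ r > 0, ∃ c : ℝ≥0∞, c ≠ ⊤ ∧
      ∀ u, N (closedBall u r) ≤ c * ENNReal.ofReal (mconv N ρ u) := by
  obtain ⟨r, hr, hball⟩ := Metric.nhds_basis_closedBall.eventually_iff.1 <|
    ρ.continuous.continuousAt.eventually (lt_mem_nhds (half_lt_self hρ0))
  have ha : ENNReal.ofReal (ρ 0 / 2) ≠ 0 := by simpa using half_pos hρ0
  refine ⟨r, hr, (ENNReal.ofReal (ρ 0 / 2))⁻¹, ENNReal.inv_ne_top.2 ha, fun u => ?_⟩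
  rw [← hN.lintegral_ofReal_comp_sub hρ, ← ENNReal.div_eq_inv_mul,
    ENNReal.le_div_iff_mul_le (Or.inl ha) (Or.inl ENNReal.ofReal_ne_top), mul_comm,
    ← lintegral_indicator_const measurableSet_closedBall]
  refine lintegral_mono fun y => ?_
  by_cases hy : y ∈ closedBall u r
  · rw [indicator_of_mem hy]
    refine ENNReal.ofReal_le_ofReal (hball ?_).le
    rwa [mem_closedBall, dist_zero_right, ← dist_eq_norm, dist_comm]
  · rw [indicator_of_notMem hy]
    exact zero_le

lemma closedBall_subset_unitThick {Ω : Set (EuclideanSpace ℝ (Fin d))}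
    {z : EuclideanSpace ℝ (Fin d)} (hz : z ∈ frontier Ω) : closedBall z 1 ⊆ unitThick Ω := by
  rw [frontier_eq_closure_inter_closure] at hz
  intro w hw
  have hdist : ∀ s : Set (EuclideanSpace ℝ (Fin d)), z ∈ closure s → infDist w s ≤ 1 :=
    fun s hs => by
      linarith [infDist_le_infDist_add_dist (x := w) (y := z) (s := s),
        infDist_zero_of_mem_closure hs, mem_closedBall.1 hw]
  by_cases hwΩ : w ∈ closure Ω
  · exact Or.inl ⟨hwΩ, infDist_nonneg, hdist _ hz.2⟩
  · exact Or.inr ⟨subset_closure fun h => hwΩ (subset_closure h), infDist_nonneg, hdist _ hz.1⟩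

lemma decayKernel_mul_volume_le_setLIntegral_unitThick {Ω : Set (EuclideanSpace ℝ (Fin d))}
    {x y : EuclideanSpace ℝ (Fin d)} (hx : x ∈ Ω) (hy : y ∉ Ω) (p q : ℕ) :
    decayKernel (p + q) x y * volume (closedBall (0 : EuclideanSpace ℝ (Fin d)) 1) ≤
      2 ^ p * decayKernel q x y * ∫⁻ w in unitThick Ω, decayKernel p x w := by
  obtain ⟨z, hz, hxz⟩ := exists_mem_frontier_dist_le hx hy
  calc decayKernel (p + q) x y * volume (closedBall (0 : EuclideanSpace ℝ (Fin d)) 1)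
      = ∫⁻ _ in closedBall z 1, decayKernel q x y * decayKernel p x y := by
        rw [setLIntegral_const, Measure.addHaar_closedBall_center volume z, decayKernel_add,
          mul_comm (decayKernel p x y)]
    _ ≤ ∫⁻ w in closedBall z 1, 2 ^ p * decayKernel q x y * decayKernel p x w := by
        refine setLIntegral_mono ((measurable_decayKernel_right p x).const_mul _) fun w hw => ?_
        have hxw : 1 + dist x w ≤ 2 * (1 + dist x y) := by
          linarith [dist_triangle x z w, mem_closedBall'.1 hw, dist_nonneg (x := x) (y := y)]
        calc decayKernel q x y * decayKernel p x y
            ≤ decayKernel q x y * (ENNReal.ofReal (2 ^ p) * decayKernel p x w) := by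
              gcongr
              exact decayKernel_le_ofReal_pow_mul zero_le_two hxw
          _ = 2 ^ p * decayKernel q x y * decayKernel p x w := by
              rw [ENNReal.ofReal_pow zero_le_two, ENNReal.ofReal_ofNat]
              ring
    _ ≤ ∫⁻ w in unitThick Ω, 2 ^ p * decayKernel q x y * decayKernel p x w :=
        lintegral_mono_set (closedBall_subset_unitThick hz)
    _ = 2 ^ p * decayKernel q x y * ∫⁻ w in unitThick Ω, decayKernel p x w :=
        lintegral_const_mul' _ _ (ENNReal.mul_ne_top (by simp) (decayKernel_ne_top q x y))

lemma setLIntegral_compl_decayKernel_le (N : Measure (EuclideanSpace ℝ (Fin d))) (K : ℕ)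
    {Ω : Set (EuclideanSpace ℝ (Fin d))} {x : EuclideanSpace ℝ (Fin d)} (hx : x ∈ Ω) :
    ∫⁻ y in Ωᶜ, decayKernel (K + (d + 1) + K) x y ∂N ≤
      2 ^ (K + (d + 1)) / volume (closedBall (0 : EuclideanSpace ℝ (Fin d)) 1) *
        ∫⁻ w in unitThick Ω, decayKernel (d + 1) x w * ∫⁻ y, decayKernel K w y ∂N := by
  set a := 2 ^ (K + (d + 1)) / volume (closedBall (0 : EuclideanSpace ℝ (Fin d)) 1)
  set U := unitThick Ω
  calc ∫⁻ y in Ωᶜ, decayKernel (K + (d + 1) + K) x y ∂N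
      ≤ ∫⁻ y in Ωᶜ, a * (∫⁻ w in U, decayKernel (K + (d + 1)) x w) * decayKernel K x y ∂N := by
        refine setLIntegral_mono ((measurable_decayKernel_right K x).const_mul _) fun y hy => ?_
        have h := decayKernel_mul_volume_le_setLIntegral_unitThick hx hy (K + (d + 1)) K
        rw [← ENNReal.le_div_iff_mul_le (Or.inl (measure_closedBall_pos volume 0 one_pos).ne')
          (Or.inl measure_closedBall_lt_top.ne)] at h
        refine h.trans (le_of_eq ?_)
        simp only [a, div_eq_mul_inv]
        ring
    _ ≤ a * (∫⁻ w in U, decayKernel (K + (d + 1)) x w) * ∫⁻ y, decayKernel K x y ∂N := by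
        rw [lintegral_const_mul _ (measurable_decayKernel_right K x)]
        gcongr
        exact Measure.restrict_le_self
    _ = a * ∫⁻ w in U,
          decayKernel (d + 1) x w * (decayKernel K x w * ∫⁻ y, decayKernel K x y ∂N) := by
        rw [mul_assoc, ← lintegral_mul_const _ (measurable_decayKernel_right _ x)]
        simp only [decayKernel_add, mul_comm (decayKernel K x _), mul_assoc]
    _ ≤ a * ∫⁻ w in U, decayKernel (d + 1) x w * ∫⁻ y, decayKernel K w y ∂N := by
        gcongr a * ∫⁻ w in U, decayKernel (d + 1) x w * ?_ with w
        exact decayKernel_mul_lintegral_decayKernel_le N K x w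

theorem exists_lintegral_cross_decayKernel_le (N : Measure (EuclideanSpace ℝ (Fin d)))
    [SFinite N] (K : ℕ) :
    ∃ A : ℝ≥0∞, A ≠ ⊤ ∧ ∀ Ω : Set (EuclideanSpace ℝ (Fin d)),
      ∫⁻ x in Ω, ∫⁻ y in Ωᶜ, decayKernel (K + (d + 1) + K) x y ∂N ≤
        A * ∫⁻ x in unitThick Ω, ∫⁻ y, decayKernel K x y ∂N := by
  set a := 2 ^ (K + (d + 1)) / volume (closedBall (0 : EuclideanSpace ℝ (Fin d)) 1)
  set J := ∫⁻ y, decayKernel (d + 1) (0 : EuclideanSpace ℝ (Fin d)) y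
  set M : EuclideanSpace ℝ (Fin d) → ℝ≥0∞ := fun x => ∫⁻ y, decayKernel K x y ∂N
  have ha : a ≠ ⊤ := ENNReal.div_ne_top (by simp) (measure_closedBall_pos volume 0 one_pos).ne'
  have hJ : J ≠ ⊤ := (lintegral_decayKernel_lt_top volume (by simp) 0).ne
  have hM : Measurable M := (continuous_decayKernel K).measurable.lintegral_prod_right'
  have hG : Measurable fun q : EuclideanSpace ℝ (Fin d) × EuclideanSpace ℝ (Fin d) =>
      decayKernel (d + 1) q.1 q.2 * M q.2 :=
    (continuous_decayKernel (d + 1)).measurable.mul (hM.comp measurable_snd)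
  refine ⟨a * J, ENNReal.mul_ne_top ha hJ, fun Ω => ?_⟩
  calc ∫⁻ x in Ω, ∫⁻ y in Ωᶜ, decayKernel (K + (d + 1) + K) x y ∂N
      ≤ ∫⁻ x in Ω, a * ∫⁻ w in unitThick Ω, decayKernel (d + 1) x w * M w :=
        setLIntegral_mono (hG.lintegral_prod_right'.const_mul a) fun x hx =>
          setLIntegral_compl_decayKernel_le N K hx
    _ ≤ a * ∫⁻ x, ∫⁻ w in unitThick Ω, decayKernel (d + 1) x w * M w := by
        rw [← lintegral_const_mul' _ _ ha]
        exact setLIntegral_le_lintegral _ _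
    _ = a * ∫⁻ w in unitThick Ω, J * M w := by
        rw [lintegral_lintegral_swap hG.aemeasurable]
        congr 1
        refine lintegral_congr fun w => ?_
        simp_rw [decayKernel_comm (d + 1) _ w]
        rw [lintegral_mul_const _ (measurable_decayKernel_right _ w), lintegral_decayKernel_eq]
    _ = a * J * ∫⁻ x in unitThick Ω, M x := by rw [lintegral_const_mul' _ _ hJ, mul_assoc]

end Euclidean

theorem cross_term_bound_general {d : ℕ} (m : EuclideanSpace ℝ (Fin d) → ℝ)
    (hm : IsOrderFunction m)
    (N : Measure (EuclideanSpace ℝ (Fin d))) [IsLocallyFiniteMeasure N]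
    (hN : IsTempered N)
    (ρ : SchwartzMap (EuclideanSpace ℝ (Fin d)) ℝ)
    (hρpos : ∀ x, 0 ≤ ρ x) (hρ0 : 0 < ρ 0)
    (hbound : ∀ x, mconv N (fun z => ρ z) x ≤ m x) :
    ∃ C : ℝ, 0 < C ∧ ∀ Ω : Set (EuclideanSpace ℝ (Fin d)), MeasurableSet Ω →
      ∫⁻ x in Ω, (∫⁻ y in Ωᶜ, ENNReal.ofReal (ρ (x - y)) ∂N) ≤
        ENNReal.ofReal C * ∫⁻ x in unitThick Ω, ENNReal.ofReal (m x) := by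
  obtain ⟨C, ν, hC, horder⟩ := hm.exists_decayKernel_mul_le
  obtain ⟨r, hr, c, hc, hball⟩ := hN.exists_measure_closedBall_le hρpos hρ0
  obtain ⟨B, hB, hmoment⟩ := exists_lintegral_decayKernel_le N hC hc horder hr
    (fun u => (hball u).trans (by gcongr; exact hbound u)) (p := d + 1) (by simp)
  set K := ν + (d + 1)
  obtain ⟨A, hA, hcross⟩ := exists_lintegral_cross_decayKernel_le N K
  obtain ⟨D, hD, hρdecay⟩ := ρ.exists_enorm_sub_le_decayKernel (K + (d + 1) + K)
  have hDAB : D * A * B ≠ ⊤ := by finiteness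
  refine ⟨(D * A * B).toReal + 1, by positivity, fun Ω _ => ?_⟩
  calc ∫⁻ x in Ω, ∫⁻ y in Ωᶜ, ENNReal.ofReal (ρ (x - y)) ∂N
      ≤ ∫⁻ x in Ω, ∫⁻ y in Ωᶜ, D * decayKernel (K + (d + 1) + K) x y ∂N :=
        lintegral_mono fun x => lintegral_mono fun y =>
          (Real.ofReal_le_enorm _).trans (hρdecay x y)
    _ = D * ∫⁻ x in Ω, ∫⁻ y in Ωᶜ, decayKernel (K + (d + 1) + K) x y ∂N := by
        simp only [lintegral_const_mul' D _ hD]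
    _ ≤ D * (A * ∫⁻ x in unitThick Ω, ∫⁻ y, decayKernel K x y ∂N) := by
        gcongr
        exact hcross Ω
    _ ≤ D * (A * ∫⁻ x in unitThick Ω, B * ENNReal.ofReal (m x)) := by
        gcongr with x
        exact hmoment x
    _ = D * A * B * ∫⁻ x in unitThick Ω, ENNReal.ofReal (m x) := by
        rw [lintegral_const_mul' _ _ hB]
        ring
    _ ≤ ENNReal.ofReal ((D * A * B).toReal + 1) * ∫⁻ x in unitThick Ω, ENNReal.ofReal (m x) := by
        gcongr
        rw [ENNReal.le_ofReal_iff_toReal_le hDAB (by positivity)]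
        linarith

/-- The cross term `∫_Ω ∫_{Ωᶜ} ρ(x-y) dN(y) dx` is controlled by the integral of the
order function over the unit thickening of the boundary of `Ω`. -/
theorem cross_term_bound {d : ℕ} (m : EuclideanSpace ℝ (Fin d) → ℝ)
    (hm : IsOrderFunction m)
    (N : Measure (EuclideanSpace ℝ (Fin d))) [IsLocallyFiniteMeasure N]
    (hN : IsTempered N)
    (ρ : SchwartzMap (EuclideanSpace ℝ (Fin d)) ℝ)
    (hρpos : ∀ x, 0 ≤ ρ x) (hρint : ∫ x, ρ x = 1) (hρ0 : 0 < ρ 0)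
    (hbound : ∀ x, mconv N (fun z => ρ z) x ≤ m x) :
    ∃ C : ℝ, 0 < C ∧ ∀ Ω : Set (EuclideanSpace ℝ (Fin d)), MeasurableSet Ω →
      ∫⁻ x in Ω, (∫⁻ y in Ωᶜ, ENNReal.ofReal (ρ (x - y)) ∂N) ≤
        ENNReal.ofReal C * ∫⁻ x in unitThick Ω, ENNReal.ofReal (m x) :=
  cross_term_bound_general m hm N hN ρ hρpos hρ0 hbound

end
end

section
/- Let m be an order function on ℝ^n, let T ⊆ ℝ^n be a measurable set, and let Q be a countable 1-separated subset of ℝ^n (i.e. |x − y| ≥ 1 for all distinct x, y ∈ Q) such that the ball B(x,1/2) is contained in T for every x ∈ Q. Then there exists a constant C > 0 depending only on n and m such that Σ_{x ∈ Q} m(x) ≤ C ∫_T m(x) dx. -/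
open MeasureTheory Metric Set

noncomputable section

/-- If `Q` is a countable 1-separated set whose balls of radius `1/2` lie in `T`, then the
sum of an order function over `Q` is controlled by its integral over `T`. -/
theorem sum_le_integral_of_separated {n : ℕ} (m : EuclideanSpace ℝ (Fin n) → ℝ)
    (hm : IsOrderFunction m) :
    ∃ C : ℝ, 0 < C ∧
      ∀ (T Q : Set (EuclideanSpace ℝ (Fin n))), MeasurableSet T → Q.Countable →
        (∀ x ∈ Q, ∀ y ∈ Q, x ≠ y → 1 ≤ ‖x - y‖) →
        (∀ x ∈ Q, ball x (1 / 2) ⊆ T) →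
        ∑' x : Q, ENNReal.ofReal (m ↑x) ≤
          ENNReal.ofReal C * ∫⁻ x in T, ENNReal.ofReal (m x) := by
  obtain ⟨hpos, C₀, ν, hC₀, hν, hbound⟩ := hm
  set v : ENNReal := volume (ball (0 : EuclideanSpace ℝ (Fin n)) (1/2)) with hv
  have hv0 : v ≠ 0 := (measure_ball_pos _ _ (by norm_num)).ne'
  have hvt : v ≠ ⊤ := measure_ball_lt_top.ne
  set K : ℝ := C₀ * (3/2) ^ ν with hKdef
  have hKpos : 0 < K := mul_pos hC₀ (Real.rpow_pos_of_pos (by norm_num) ν)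
  refine ⟨K / v.toReal, div_pos hKpos (ENNReal.toReal_pos hv0 hvt), ?_⟩
  intro T Q hT hQc hsep hball
  haveI := hQc.to_subtype
  have key : ∀ x : Q, ENNReal.ofReal (m ↑x) * v ≤
      ENNReal.ofReal K * ∫⁻ y in ball (x : EuclideanSpace ℝ (Fin n)) (1/2), ENNReal.ofReal (m y) := by
    intro x
    have h1 : ENNReal.ofReal (m ↑x) * v =
        ∫⁻ _ in ball (x : EuclideanSpace ℝ (Fin n)) (1/2), ENNReal.ofReal (m ↑x) := by
      rw [setLIntegral_const, Measure.addHaar_ball_center]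
    rw [h1, ← lintegral_const_mul' _ _ ENNReal.ofReal_ne_top]
    refine lintegral_mono_ae ((ae_restrict_iff' measurableSet_ball).2
      (Filter.Eventually.of_forall fun y hy => ?_))
    rw [← ENNReal.ofReal_mul hKpos.le]
    apply ENNReal.ofReal_le_ofReal
    have hxy : ‖(x : EuclideanSpace ℝ (Fin n)) - y‖ < 1/2 := by
      rw [← dist_eq_norm, dist_comm]; exact hy
    have h2 : (1 + ‖(x : EuclideanSpace ℝ (Fin n)) - y‖) ^ ν ≤ (3/2 : ℝ) ^ ν := by
      apply Real.rpow_le_rpow (by positivity) (by linarith) hν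
    calc m ↑x ≤ C₀ * (1 + ‖(x : EuclideanSpace ℝ (Fin n)) - y‖) ^ ν * m y := hbound _ y
      _ ≤ K * m y := by
          apply mul_le_mul_of_nonneg_right _ (hpos y).le
          exact mul_le_mul_of_nonneg_left h2 hC₀.le
  have hdisj : Pairwise (Function.onFun Disjoint
      fun x : Q => ball (x : EuclideanSpace ℝ (Fin n)) (1/2)) := by
    intro a b hab
    apply ball_disjoint_ball
    rw [dist_eq_norm]
    have := hsep a a.2 b b.2 (Subtype.coe_injective.ne hab)
    linarith
  have hsum : ∑' x : Q, ∫⁻ y in ball (x : EuclideanSpace ℝ (Fin n)) (1/2), ENNReal.ofReal (m y)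
      = ∫⁻ y in ⋃ x : Q, ball (x : EuclideanSpace ℝ (Fin n)) (1/2), ENNReal.ofReal (m y) := by
    rw [Measure.restrict_iUnion hdisj fun _ => measurableSet_ball, lintegral_sum_measure]
  have hsub : (⋃ x : Q, ball (x : EuclideanSpace ℝ (Fin n)) (1/2)) ⊆ T :=
    iUnion_subset fun x => hball x x.2
  have main : (∑' x : Q, ENNReal.ofReal (m ↑x)) * v ≤
      ENNReal.ofReal K * ∫⁻ x in T, ENNReal.ofReal (m x) := by
    rw [← ENNReal.tsum_mul_right]
    calc ∑' x : Q, ENNReal.ofReal (m ↑x) * v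
        ≤ ∑' x : Q, ENNReal.ofReal K *
            ∫⁻ y in ball (x : EuclideanSpace ℝ (Fin n)) (1/2), ENNReal.ofReal (m y) :=
          ENNReal.tsum_le_tsum key
      _ = ENNReal.ofReal K * ∑' x : Q,
            ∫⁻ y in ball (x : EuclideanSpace ℝ (Fin n)) (1/2), ENNReal.ofReal (m y) :=
          ENNReal.tsum_mul_left
      _ ≤ ENNReal.ofReal K * ∫⁻ x in T, ENNReal.ofReal (m x) := by
          rw [hsum]; exact mul_le_mul_right (lintegral_mono_set hsub) _
  have hC : ENNReal.ofReal (K / v.toReal) = ENNReal.ofReal K / v := by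
    rw [ENNReal.ofReal_div_of_pos (ENNReal.toReal_pos hv0 hvt), ENNReal.ofReal_toReal hvt]
  rw [hC]
  have hre : ENNReal.ofReal K / v * (∫⁻ x in T, ENNReal.ofReal (m x)) =
      ENNReal.ofReal K * (∫⁻ x in T, ENNReal.ofReal (m x)) / v := by
    rw [div_eq_mul_inv, div_eq_mul_inv, mul_right_comm]
  rw [hre, ENNReal.le_div_iff_mul_le (Or.inl hv0) (Or.inl hvt)]
  calc (∑' x : Q, ENNReal.ofReal (m ↑x)) * v ≤ _ := main
    _ ≤ _ := le_rfl

end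
end

section
/- Let m be an order function on ℝ^n with constant C₀ and exponent ν′ (so m(x) ≤ C₀ (1 + |x − y|)^{ν′} m(y) for all x, y). Let P be a countable 1-separated subset of ℝ^n (i.e. |x − y| ≥ 1 for all distinct x, y ∈ P), let Q ⊆ ℝ^n be countable, and let r ≥ 1 be such that for every x ∈ P there exists y ∈ Q with |x − y| ≤ r. Then there exists a constant C > 0 depending only on n and m such that Σ_{x ∈ P} m(x) ≤ C r^{ν′ + n} Σ_{y ∈ Q} m(y). -/
open MeasureTheory Metric Set Module

noncomputable section

/-- Comparison of sums of an order function over a 1-separated set `P` and a set `Q`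
which is `r`-dense relative to `P`. -/
theorem sum_separated_le_sum_near {n : ℕ} (m : EuclideanSpace ℝ (Fin n) → ℝ)
    (C₀ ν' : ℝ) (hm0 : ∀ x, 0 < m x) (hC₀ : 0 < C₀) (hν' : 0 ≤ ν')
    (hbd : ∀ x y, m x ≤ C₀ * (1 + ‖x - y‖) ^ ν' * m y) :
    ∃ C : ℝ, 0 < C ∧
      ∀ (P Q : Set (EuclideanSpace ℝ (Fin n))) (r : ℝ),
        P.Countable → Q.Countable →
        (∀ x ∈ P, ∀ y ∈ P, x ≠ y → 1 ≤ ‖x - y‖) →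
        1 ≤ r →
        (∀ x ∈ P, ∃ y ∈ Q, ‖x - y‖ ≤ r) →
        ∑' x : P, ENNReal.ofReal (m ↑x) ≤
          ENNReal.ofReal (C * r ^ (ν' + n)) * ∑' y : Q, ENNReal.ofReal (m ↑y) := by
  classical
  refine ⟨C₀ * 2 ^ ν' * 3 ^ n, by positivity, ?_⟩
  intro P Q r hP hQ hsep hr hnear
  haveI := hP.to_subtype
  haveI := hQ.to_subtype
  have hr0 : (0:ℝ) < r := lt_of_lt_of_le one_pos hr
  choose f hfQ hfd using hnear
  set F : P → Q := fun x => ⟨f x x.2, hfQ x x.2⟩ with hF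
  set B : ENNReal := volume (ball (0 : EuclideanSpace ℝ (Fin n)) 1) with hB
  have hdim : finrank ℝ (EuclideanSpace ℝ (Fin n)) = n := finrank_euclideanSpace_fin
  have hB0 : B ≠ 0 := (measure_ball_pos _ _ one_pos).ne'
  have hBt : B ≠ ⊤ := measure_ball_lt_top.ne
  have hsig : ∑' x : P, ENNReal.ofReal (m ↑x) =
      ∑' (y : Q) (x : {x : P // F x = y}), ENNReal.ofReal (m ((x : P) : EuclideanSpace ℝ (Fin n))) := by
    rw [← ENNReal.tsum_sigma, ← (Equiv.sigmaFiberEquiv F).tsum_eq]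
    rfl
  rw [hsig]
  rw [← ENNReal.tsum_mul_left]
  refine ENNReal.tsum_le_tsum fun y => ?_
  -- fiber bound
  set S := {x : P // F x = y} with hS
  have hdy : ∀ x : S, ‖((x : P) : EuclideanSpace ℝ (Fin n)) - (y : EuclideanSpace ℝ (Fin n))‖ ≤ r := by
    intro x
    have h1 : (F x.1 : EuclideanSpace ℝ (Fin n)) = (y : EuclideanSpace ℝ (Fin n)) := by
      rw [x.2]
    have h2 := hfd (x.1 : EuclideanSpace ℝ (Fin n)) x.1.2
    simpa [hF, ← h1] using h2
  -- pointwise bound m x ≤ K * m y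
  have hK : ∀ x : S, m ((x : P) : EuclideanSpace ℝ (Fin n)) ≤ C₀ * (2 * r) ^ ν' * m y := by
    intro x
    refine (hbd _ y).trans ?_
    have h1 : (1 + ‖((x : P) : EuclideanSpace ℝ (Fin n)) - (y : EuclideanSpace ℝ (Fin n))‖) ^ ν'
        ≤ (2 * r) ^ ν' := by
      apply Real.rpow_le_rpow (by positivity) _ hν'
      have := hdy x
      linarith
    exact mul_le_mul_of_nonneg_right (mul_le_mul_of_nonneg_left h1 hC₀.le)
      (hm0 (y : EuclideanSpace ℝ (Fin n))).le
  -- disjoint balls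
  have hdisj : Pairwise (Function.onFun Disjoint
      fun x : S => ball ((x : P) : EuclideanSpace ℝ (Fin n)) 2⁻¹) := by
    intro a b hab
    apply ball_disjoint_ball
    rw [dist_eq_norm]
    have hne : ((a : P) : EuclideanSpace ℝ (Fin n)) ≠ ((b : P) : EuclideanSpace ℝ (Fin n)) := by
      intro h
      exact hab (Subtype.ext (Subtype.ext h))
    have := hsep _ a.1.2 _ b.1.2 hne
    linarith
  have hvol : ∑' x : S, volume (ball ((x : P) : EuclideanSpace ℝ (Fin n)) 2⁻¹)
      = volume (⋃ x : S, ball ((x : P) : EuclideanSpace ℝ (Fin n)) 2⁻¹) :=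
    (measure_iUnion hdisj fun _ => measurableSet_ball).symm
  have hsub : (⋃ x : S, ball ((x : P) : EuclideanSpace ℝ (Fin n)) 2⁻¹)
      ⊆ closedBall (y : EuclideanSpace ℝ (Fin n)) (r + 2⁻¹) := by
    refine iUnion_subset fun x => ?_
    refine (ball_subset_closedBall).trans (closedBall_subset_closedBall' ?_)
    rw [dist_eq_norm]
    have := hdy x
    linarith
  set v : ENNReal := ENNReal.ofReal ((2⁻¹ : ℝ) ^ n) * B with hv
  have hball : ∀ x : S, volume (ball ((x : P) : EuclideanSpace ℝ (Fin n)) 2⁻¹) = v := by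
    intro x
    rw [Measure.addHaar_ball_of_pos _ _ (by norm_num : (0:ℝ) < 2⁻¹), hdim, hv, hB]
  have hv0 : v ≠ 0 := by
    simp only [hv, ne_eq, mul_eq_zero, not_or]
    exact ⟨by positivity, hB0⟩
  have hvt : v ≠ ⊤ := ENNReal.mul_ne_top ENNReal.ofReal_ne_top hBt
  -- main estimate multiplied by v
  have hmain : v * ∑' x : S, ENNReal.ofReal (m ((x : P) : EuclideanSpace ℝ (Fin n)))
      ≤ v * (ENNReal.ofReal (C₀ * 2 ^ ν' * 3 ^ n * r ^ (ν' + n)) * ENNReal.ofReal (m y)) := by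
    calc v * ∑' x : S, ENNReal.ofReal (m ((x : P) : EuclideanSpace ℝ (Fin n)))
        = ∑' x : S, v * ENNReal.ofReal (m ((x : P) : EuclideanSpace ℝ (Fin n))) :=
          ENNReal.tsum_mul_left.symm
      _ ≤ ∑' x : S, volume (ball ((x : P) : EuclideanSpace ℝ (Fin n)) 2⁻¹)
            * ENNReal.ofReal (C₀ * (2 * r) ^ ν' * m y) := by
          refine ENNReal.tsum_le_tsum fun x => ?_
          rw [hball x]
          exact mul_le_mul_right (ENNReal.ofReal_le_ofReal (hK x)) _
      _ = volume (⋃ x : S, ball ((x : P) : EuclideanSpace ℝ (Fin n)) 2⁻¹)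
            * ENNReal.ofReal (C₀ * (2 * r) ^ ν' * m y) := by
          rw [ENNReal.tsum_mul_right, hvol]
      _ ≤ volume (closedBall (y : EuclideanSpace ℝ (Fin n)) (r + 2⁻¹))
            * ENNReal.ofReal (C₀ * (2 * r) ^ ν' * m y) :=
          mul_le_mul_left (measure_mono hsub) _
      _ = ENNReal.ofReal ((r + 2⁻¹) ^ n) * B * ENNReal.ofReal (C₀ * (2 * r) ^ ν' * m y) := by
          rw [Measure.addHaar_closedBall _ _ (by positivity : (0:ℝ) ≤ r + 2⁻¹), hdim, hB]
      _ ≤ v * (ENNReal.ofReal (C₀ * 2 ^ ν' * 3 ^ n * r ^ (ν' + n)) * ENNReal.ofReal (m y)) := by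
          rw [hv]
          rw [show ENNReal.ofReal ((r + 2⁻¹) ^ n) * B * ENNReal.ofReal (C₀ * (2 * r) ^ ν' * m y)
            = ENNReal.ofReal ((r + 2⁻¹) ^ n) * ENNReal.ofReal (C₀ * (2 * r) ^ ν' * m y) * B by ring,
            show ENNReal.ofReal ((2⁻¹:ℝ) ^ n) * B * (ENNReal.ofReal (C₀ * 2 ^ ν' * 3 ^ n * r ^ (ν' + n)) * ENNReal.ofReal (m y))
            = ENNReal.ofReal ((2⁻¹:ℝ) ^ n) * (ENNReal.ofReal (C₀ * 2 ^ ν' * 3 ^ n * r ^ (ν' + n)) * ENNReal.ofReal (m y)) * B by ring]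
          refine mul_le_mul_left ?_ B
          rw [← ENNReal.ofReal_mul (by positivity), ← ENNReal.ofReal_mul (by positivity),
            ← ENNReal.ofReal_mul (by positivity)]
          apply ENNReal.ofReal_le_ofReal
          have h2r : (2 * r) ^ ν' = 2 ^ ν' * r ^ ν' :=
            Real.mul_rpow (by norm_num) hr0.le
          have hrn : r ^ (ν' + (n:ℝ)) = r ^ ν' * r ^ (n:ℕ) := by
            rw [Real.rpow_add hr0, Real.rpow_natCast]
          have hcube : (r + 2⁻¹) ^ n ≤ (2⁻¹:ℝ) ^ n * (3 ^ n * r ^ n) := by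
            rw [← mul_pow, ← mul_pow]
            apply pow_le_pow_left₀ (by positivity)
            linarith
          have hmy := (hm0 (y : EuclideanSpace ℝ (Fin n))).le
          calc (r + 2⁻¹) ^ n * (C₀ * (2 * r) ^ ν' * m y)
              ≤ (2⁻¹:ℝ) ^ n * (3 ^ n * r ^ n) * (C₀ * (2 * r) ^ ν' * m y) := by
                apply mul_le_mul_of_nonneg_right hcube
                have : (0:ℝ) ≤ (2*r) ^ ν' := Real.rpow_nonneg (by positivity) _
                positivity
            _ = (2⁻¹:ℝ) ^ n * (C₀ * 2 ^ ν' * 3 ^ n * r ^ (ν' + n) * m y) := by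
                rw [h2r, hrn]; ring
  have := (ENNReal.mul_le_mul_iff_right hv0 hvt).mp hmain
  exact this

end
end
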